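/- If M is finitely generic in a definable subcategory D of Mod-R and B is finitely generic in a definable subcategory B of the category R-Mod-S of (R,S)-bimodules, then the definable subcategory of Mod-S generated by the right S-module M⊗_R B equals D⊗B; that is, ⟨M⊗_R B⟩ = D⊗B. -/

import Mathlib

/-!
Core framework for formalizing statements from
"Tensor and direct extension of definable subcategories" (M. Prest).

Conventions:
* A *right* `R`-module is a type with `[AddCommGroup M] [Module Rᵐᵒᵖ M]`;
  the right action of `r : R` on `a : M` is `MulOpposite.op r • a`.
* A *left* `R`-module is a type with `[AddCommGroup L] [Module R L]`.
* An `(R,S)`-bimodule is a type with a left `R`-action and a right `S`-action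
  which commute: `[Module R B] [Module Sᵐᵒᵖ B] [SMulCommClass R Sᵐᵒᵖ B]`.
-/

open MulOpposite

universe u v

namespace MTM

/-- A pp formula for (right) `R`-modules, with free variables indexed by `ι`,
bound variables indexed by `κ` and equations indexed by `ε`:
`∃ ȳ (x̄ A + ȳ B = 0)`. -/
structure PP (R : Type u) [Ring R] (ι : Type) : Type (max u 1) where
  κ : Type
  ε : Type
  [fintκ : Fintype κ]
  [fintε : Fintype ε]
  A : Matrix ι ε R
  B : Matrix κ ε R

attribute [instance] PP.fintκ PP.fintε

namespace PP

variable {R : Type u} [Ring R] {S : Type u} [Ring S] {ι : Type} [Fintype ι]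

/-- The solution set of a pp formula in a right `R`-module. -/
def sol (φ : PP R ι) (M : Type v) [AddCommGroup M] [Module Rᵐᵒᵖ M] : Set (ι → M) :=
  { a | ∃ b : φ.κ → M, ∀ j : φ.ε,
      (∑ i, op (φ.A i j) • a i) + (∑ k, op (φ.B k j) • b k) = 0 }

/-- The solution set of a pp formula in a left `R`-module (the formula is then read
with coefficients acting on the left). -/
def solL (φ : PP R ι) (L : Type v) [AddCommGroup L] [Module R L] : Set (ι → L) :=
  { a | ∃ b : φ.κ → L, ∀ j : φ.ε,
      (∑ i, φ.A i j • a i) + (∑ k, φ.B k j • b k) = 0 }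

/-- `φ ≤ ψ` : every solution of `φ` is a solution of `ψ`, in every right `R`-module. -/
def Le (φ ψ : PP R ι) : Prop :=
  ∀ (M : Type u) [AddCommGroup M] [Module Rᵐᵒᵖ M], φ.sol M ⊆ ψ.sol M

/-- The elementary dual `Dφ = ∃ z̄ (x̄ = A z̄ ∧ B z̄ = 0)` of a pp formula for right modules;
it is a pp formula for left `R`-modules (to be interpreted via `solL`). -/
noncomputable def dual (φ : PP R ι) : PP R ι where
  κ := φ.ε
  ε := ι ⊕ φ.κ
  A := fun i e =>
    letI := Classical.decEq ι
    Sum.elim (fun i' => if i = i' then (1 : R) else 0) (fun _ => (0 : R)) e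
  B := fun z e => Sum.elim (fun i' => -(φ.A i' z)) (fun k => φ.B k z) e

/-- Transport of a pp formula along a ring homomorphism (`f⁎φ`). -/
def map (f : R →+* S) (φ : PP R ι) : PP S ι :=
  { κ := φ.κ, ε := φ.ε, A := fun i j => f (φ.A i j), B := fun k j => f (φ.B k j) }

end PP

variable (R : Type u) [Ring R] (S : Type u) [Ring S]

/-- A pp-pair `φ/ψ` for right `R`-modules: pp formulas (in `n` free variables)
with `ψ(M) ≤ φ(M)` for every right `R`-module `M`. -/
structure PPPair : Type (u + 1) where
  n : ℕ
  num : PP R (Fin n)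
  den : PP R (Fin n)
  le : ∀ (M : Type u) [AddCommGroup M] [Module Rᵐᵒᵖ M], den.sol M ⊆ num.sol M

/-- A pp-pair for left `R`-modules. -/
structure PPPairL : Type (u + 1) where
  n : ℕ
  num : PP R (Fin n)
  den : PP R (Fin n)
  le : ∀ (L : Type u) [AddCommGroup L] [Module R L], den.solL L ⊆ num.solL L

variable {R}

/-- A pp-pair is closed on a right module `M` if the two solution sets agree. -/
def PPPair.ClosedOn (p : PPPair R) (M : Type v) [AddCommGroup M] [Module Rᵐᵒᵖ M] : Prop :=
  p.num.sol M = p.den.sol M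

/-- A pp-pair is closed on a left module `L` if the two solution sets agree. -/
def PPPairL.ClosedOn (p : PPPairL R) (L : Type v) [AddCommGroup L] [Module R L] : Prop :=
  p.num.solL L = p.den.solL L

variable (R)

/-- The subcategory (class of modules, as a set of objects of `Mod-R`) defined by
closure of a set of pp-pairs. -/
def definedBy (Φ : Set (PPPair R)) : Set (ModuleCat.{u} Rᵐᵒᵖ) :=
  { M | ∀ p ∈ Φ, p.ClosedOn M }

/-- The subcategory of left modules defined by closure of a set of pp-pairs. -/
def definedByL (Φ : Set (PPPairL R)) : Set (ModuleCat.{u} R) :=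
  { L | ∀ p ∈ Φ, p.ClosedOn L }

/-- A class of right `R`-modules is a definable subcategory if it is the class of
modules on which each pp-pair in some set of pp-pairs is closed. -/
def IsDefinable (D : Set (ModuleCat.{u} Rᵐᵒᵖ)) : Prop :=
  ∃ Φ : Set (PPPair R), D = definedBy R Φ

/-- Definability for classes of left `R`-modules. -/
def IsDefinableL (D : Set (ModuleCat.{u} R)) : Prop :=
  ∃ Φ : Set (PPPairL R), D = definedByL R Φ

/-- `⟨X⟩`: the smallest definable subcategory of `Mod-R` containing `X`. -/
def gen (X : Set (ModuleCat.{u} Rᵐᵒᵖ)) : Set (ModuleCat.{u} Rᵐᵒᵖ) :=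
  ⋂₀ { D | IsDefinable R D ∧ X ⊆ D }

/-- `⟨X⟩` for classes of left modules. -/
def genL (X : Set (ModuleCat.{u} R)) : Set (ModuleCat.{u} R) :=
  ⋂₀ { D | IsDefinableL R D ∧ X ⊆ D }

/-- `φ ≤_𝒳 ψ` for a class `𝒳` of right `R`-modules. -/
def LeOn (𝒳 : Set (ModuleCat.{u} Rᵐᵒᵖ)) {ι : Type} [Fintype ι] (φ ψ : PP R ι) : Prop :=
  ∀ M ∈ 𝒳, φ.sol M ⊆ ψ.sol M

/-- A pure embedding of right `R`-modules: an injective linear map which reflects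
solution sets of pp formulas. -/
def IsPureEmb {M N : Type*} [AddCommGroup M] [Module Rᵐᵒᵖ M]
    [AddCommGroup N] [Module Rᵐᵒᵖ N] (f : M →ₗ[Rᵐᵒᵖ] N) : Prop :=
  Function.Injective f ∧
    ∀ (ι : Type) (_ : Fintype ι) (φ : PP R ι) (a : ι → M),
      (fun i => f (a i)) ∈ φ.sol N → a ∈ φ.sol M

/-- A pure-injective module: every pure embedding out of it splits. -/
def IsPureInj (N : Type u) [AddCommGroup N] [Module Rᵐᵒᵖ N] : Prop :=
  ∀ (M : Type u) [AddCommGroup M] [Module Rᵐᵒᵖ M] (g : N →ₗ[Rᵐᵒᵖ] M),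
    IsPureEmb R g → ∃ h : M →ₗ[Rᵐᵒᵖ] N, h.comp g = LinearMap.id

/-- `N` is an elementary cogenerator for the definable subcategory `D`:
a pure-injective member of `D` such that every member of `D` purely embeds in a
direct power of `N`. -/
def IsElemCogen (D : Set (ModuleCat.{u} Rᵐᵒᵖ)) (N : ModuleCat.{u} Rᵐᵒᵖ) : Prop :=
  N ∈ D ∧ IsPureInj R N ∧
    ∀ M ∈ D, ∃ (I : Type u) (g : M →ₗ[Rᵐᵒᵖ] (I → N)), IsPureEmb R g

/-- A pure-injective hull of `X`: a minimal pure embedding into a pure-injective. -/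
def IsPureInjHull {X H : Type u} [AddCommGroup X] [Module Rᵐᵒᵖ X]
    [AddCommGroup H] [Module Rᵐᵒᵖ H] (h : X →ₗ[Rᵐᵒᵖ] H) : Prop :=
  IsPureEmb R h ∧ IsPureInj R H ∧
    ∀ (Y : Type u) [AddCommGroup Y] [Module Rᵐᵒᵖ Y] (g : H →ₗ[Rᵐᵒᵖ] Y),
      IsPureEmb R (g.comp h) → IsPureEmb R g

section RingHom

variable (f : R →+* S)

/-- Restriction of scalars of a (bundled) right `S`-module along `f : R →+* S`. -/
noncomputable def resMod (M : ModuleCat.{u} Sᵐᵒᵖ) : ModuleCat.{u} Rᵐᵒᵖ :=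
  (ModuleCat.restrictScalars (RingHom.op f)).obj M

/-- The (definable) restriction `C|_R` of a definable subcategory `C` of `Mod-S`
along `f : R → S` : the subcategory of `Mod-R` defined by all pp-pairs `φ/ψ` for
`R`-modules such that `f⁎φ/f⁎ψ` is closed on `C`. -/
def restrictSubcat (C : Set (ModuleCat.{u} Sᵐᵒᵖ)) : Set (ModuleCat.{u} Rᵐᵒᵖ) :=
  definedBy R { p : PPPair R | ∀ M ∈ C, (p.num.map f).sol M = (p.den.map f).sol M }

/-- The definable trace of `Mod-S` in `Mod-R` along `f`. -/
def DefTr : Set (ModuleCat.{u} Rᵐᵒᵖ) := restrictSubcat R S f Set.univ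

/-- The direct extension `D^S` of a definable subcategory `D` of `Mod-R`:
those `S`-modules whose restriction along `f` lies in `D`. -/
def directExt (D : Set (ModuleCat.{u} Rᵐᵒᵖ)) : Set (ModuleCat.{u} Sᵐᵒᵖ) :=
  { M | resMod R S f M ∈ D }

end RingHom

end MTM
-- Tensor product over a (possibly noncommutative) ring.
namespace MTM

open MulOpposite TensorProduct

universe x
variable (R : Type u) [Ring R] (S : Type u) [Ring S]

section Tensor

variable (M : Type u) [AddCommGroup M] [Module Rᵐᵒᵖ M]
variable (B : Type u) [AddCommGroup B] [Module R B]

/-- The subgroup of `M ⊗_ℤ B` of balancing relations. -/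
def tensorRel : Submodule ℤ (TensorProduct ℤ M B) :=
  Submodule.span ℤ
    { x | ∃ (r : R) (m : M) (b : B), x = (op r • m) ⊗ₜ[ℤ] b - m ⊗ₜ[ℤ] (r • b) }

/-- The tensor product `M ⊗_R B` of a right `R`-module and a left `R`-module,
as the quotient of `M ⊗_ℤ B` by the balancing relations. -/
abbrev RTensor : Type u := TensorProduct ℤ M B ⧸ tensorRel R M B

/-- `m ⊗ b` in `M ⊗_R B`. -/
noncomputable def rtmul (m : M) (b : B) : RTensor R M B := Submodule.Quotient.mk (m ⊗ₜ[ℤ] b)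

variable {M B}
variable {M' : Type u} [AddCommGroup M'] [Module Rᵐᵒᵖ M']
variable {B' : Type u} [AddCommGroup B'] [Module R B']

theorem rel_le_B (g : B →ₗ[R] B') :
    tensorRel R M B ≤
      (tensorRel R M B').comap (LinearMap.lTensor M g.toAddMonoidHom.toIntLinearMap) := by
  refine Submodule.span_le.mpr ?_
  rintro x ⟨r, m, b, rfl⟩
  refine Submodule.subset_span ⟨r, m, g b, ?_⟩
  show (op r • m) ⊗ₜ[ℤ] g b - m ⊗ₜ[ℤ] g (r • b) = _
  rw [g.map_smul]

theorem rel_le_M (h : M →ₗ[Rᵐᵒᵖ] M') :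
    tensorRel R M B ≤
      (tensorRel R M' B).comap (LinearMap.rTensor B h.toAddMonoidHom.toIntLinearMap) := by
  refine Submodule.span_le.mpr ?_
  rintro x ⟨r, m, b, rfl⟩
  refine Submodule.subset_span ⟨r, h m, b, ?_⟩
  rw [← h.map_smul]
  erw [map_sub, LinearMap.rTensor_tmul, LinearMap.rTensor_tmul]
  rfl

/-- Functoriality of `M ⊗_R -` in left `R`-module maps (as a `ℤ`-linear map). -/
noncomputable def mapB (g : B →ₗ[R] B') : RTensor R M B →ₗ[ℤ] RTensor R M B' :=
  Submodule.mapQ _ _ _ (rel_le_B R g)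

/-- Functoriality of `- ⊗_R B` in right `R`-module maps (as a `ℤ`-linear map). -/
noncomputable def mapM (h : M →ₗ[Rᵐᵒᵖ] M') : RTensor R M B →ₗ[ℤ] RTensor R M' B :=
  Submodule.mapQ _ _ _ (rel_le_M R h)

@[simp] theorem mapB_mk (g : B →ₗ[R] B') (y : TensorProduct ℤ M B) :
    mapB R g (Submodule.Quotient.mk y) =
      Submodule.Quotient.mk (LinearMap.lTensor M g.toAddMonoidHom.toIntLinearMap y) :=
  rfl

@[simp] theorem mapM_mk (h : M →ₗ[Rᵐᵒᵖ] M') (y : TensorProduct ℤ M B) :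
    mapM R h (Submodule.Quotient.mk y) =
      Submodule.Quotient.mk (LinearMap.rTensor B h.toAddMonoidHom.toIntLinearMap y) :=
  rfl

section SAction

variable [Module Sᵐᵒᵖ B] [SMulCommClass R Sᵐᵒᵖ B]

/-- The right action of `s : S` on an `(R,S)`-bimodule, as a left `R`-linear map. -/
def sEndo (s : Sᵐᵒᵖ) : B →ₗ[R] B where
  toFun b := s • b
  map_add' x y := smul_add s x y
  map_smul' r b := (smul_comm r s b).symm

variable (M B)

/-- The right `S`-action on `M ⊗_R B` as a ring homomorphism `Sᵐᵒᵖ → End_ℤ (M ⊗_R B)`. -/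
noncomputable def rho : Sᵐᵒᵖ →+* Module.End ℤ (RTensor R M B) where
  toFun s := mapB R (sEndo R S (B := B) s)
  map_one' := by
    refine Submodule.linearMap_qext _ (TensorProduct.ext' fun m b => ?_)
    show (Submodule.Quotient.mk (m ⊗ₜ[ℤ] ((1 : Sᵐᵒᵖ) • b)) : RTensor R M B) =
      Submodule.Quotient.mk (m ⊗ₜ[ℤ] b)
    rw [one_smul]
  map_mul' s s' := by
    refine Submodule.linearMap_qext _ (TensorProduct.ext' fun m b => ?_)
    show (Submodule.Quotient.mk (m ⊗ₜ[ℤ] ((s * s') • b)) : RTensor R M B) =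
      Submodule.Quotient.mk (m ⊗ₜ[ℤ] (s • s' • b))
    rw [mul_smul]
  map_zero' := by
    refine Submodule.linearMap_qext _ (TensorProduct.ext' fun m b => ?_)
    show (Submodule.Quotient.mk (m ⊗ₜ[ℤ] ((0 : Sᵐᵒᵖ) • b)) : RTensor R M B) = 0
    rw [zero_smul, TensorProduct.tmul_zero]
    rfl
  map_add' s s' := by
    refine Submodule.linearMap_qext _ (TensorProduct.ext' fun m b => ?_)
    show (Submodule.Quotient.mk (m ⊗ₜ[ℤ] ((s + s') • b)) : RTensor R M B) =
      Submodule.Quotient.mk (m ⊗ₜ[ℤ] (s • b)) + Submodule.Quotient.mk (m ⊗ₜ[ℤ] (s' • b))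
    rw [add_smul, TensorProduct.tmul_add]
    rfl

/-- The right `S`-module structure on `M ⊗_R B` for an `(R,S)`-bimodule `B`. -/
noncomputable instance instModS : Module Sᵐᵒᵖ (RTensor R M B) :=
  Module.compHom _ (rho R S M B)

theorem smul_mk (s : Sᵐᵒᵖ) (y : TensorProduct ℤ M B) :
    s • (Submodule.Quotient.mk y : RTensor R M B) =
      Submodule.Quotient.mk
        (LinearMap.lTensor M ((sEndo R S (B := B) s).toAddMonoidHom.toIntLinearMap) y) :=
  rfl

@[simp] theorem smul_rtmul (s : Sᵐᵒᵖ) (m : M) (b : B) :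
    s • rtmul R M B m b = rtmul R M B m (s • b) :=
  rfl

end SAction

end Tensor

end MTM
namespace MTM

open MulOpposite TensorProduct

variable (R : Type u) [Ring R] (S : Type u) [Ring S]

section TensorMaps

variable (M : Type u) [AddCommGroup M] [Module Rᵐᵒᵖ M]
variable {M' : Type u} [AddCommGroup M'] [Module Rᵐᵒᵖ M']
variable (B : Type u) [AddCommGroup B] [Module R B] [Module Sᵐᵒᵖ B] [SMulCommClass R Sᵐᵒᵖ B]
variable {B' : Type u} [AddCommGroup B'] [Module R B'] [Module Sᵐᵒᵖ B'] [SMulCommClass R Sᵐᵒᵖ B']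

/-- Functoriality of `M ⊗_R -` in maps of `(R,S)`-bimodules, as a map of right
`S`-modules. -/
noncomputable def mapBS (g : B →ₗ[R] B') (hg : ∀ (s : Sᵐᵒᵖ) (b : B), g (s • b) = s • g b) :
    RTensor R M B →ₗ[Sᵐᵒᵖ] RTensor R M B' where
  toFun := mapB R g
  map_add' := map_add _
  map_smul' s x := by
    obtain ⟨y, rfl⟩ := Submodule.Quotient.mk_surjective _ x
    show mapB R g (s • Submodule.Quotient.mk y) = s • mapB R g (Submodule.Quotient.mk y)
    rw [smul_mk R S, mapB_mk, mapB_mk, smul_mk R S,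
      ← LinearMap.comp_apply, ← LinearMap.comp_apply, ← LinearMap.lTensor_comp,
      ← LinearMap.lTensor_comp]
    have hcomp : g.toAddMonoidHom.toIntLinearMap ∘ₗ
          (sEndo R S (B := B) s).toAddMonoidHom.toIntLinearMap =
        (sEndo R S (B := B') s).toAddMonoidHom.toIntLinearMap ∘ₗ
          g.toAddMonoidHom.toIntLinearMap := by
      ext b
      exact hg s b
    rw [hcomp]

/-- Functoriality of `- ⊗_R B` in maps of right `R`-modules, as a map of right
`S`-modules. -/
noncomputable def mapMS (h : M →ₗ[Rᵐᵒᵖ] M') :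
    RTensor R M B →ₗ[Sᵐᵒᵖ] RTensor R M' B where
  toFun := mapM R h
  map_add' := map_add _
  map_smul' s x := by
    obtain ⟨y, rfl⟩ := Submodule.Quotient.mk_surjective _ x
    show mapM R h (s • Submodule.Quotient.mk y) = s • mapM R h (Submodule.Quotient.mk y)
    rw [smul_mk R S, mapM_mk, mapM_mk, smul_mk R S,
      ← LinearMap.comp_apply, ← LinearMap.comp_apply, LinearMap.rTensor_comp_lTensor,
      LinearMap.lTensor_comp_rTensor]

end TensorMaps

section Canonical

variable (M : Type u) [AddCommGroup M] [Module Rᵐᵒᵖ M]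

/-- The canonical map `M ⊗_R (∏ᵢ Lᵢ) → ∏ᵢ (M ⊗_R Lᵢ)` for a family of left
`R`-modules, as a `ℤ`-linear map. -/
noncomputable def canonicalL {ι' : Type u} (L : ι' → Type u)
    [∀ i, AddCommGroup (L i)] [∀ i, Module R (L i)] :
    RTensor R M (∀ i, L i) →ₗ[ℤ] ∀ i, RTensor R M (L i) :=
  LinearMap.pi fun i => mapB R (LinearMap.proj i)

/-- The canonical map `M ⊗_R (∏ᵢ Lᵢ) → ∏ᵢ (M ⊗_R Lᵢ)` for a family of
`(R,S)`-bimodules, as a map of right `S`-modules. -/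
noncomputable def canonicalB {ι' : Type u} (L : ι' → Type u)
    [∀ i, AddCommGroup (L i)] [∀ i, Module R (L i)] [∀ i, Module Sᵐᵒᵖ (L i)]
    [∀ i, SMulCommClass R Sᵐᵒᵖ (L i)] :
    RTensor R M (∀ i, L i) →ₗ[Sᵐᵒᵖ] ∀ i, RTensor R M (L i) :=
  LinearMap.pi fun i => mapBS R S M (∀ j, L j) (LinearMap.proj i) (fun _ _ => rfl)

/-- The canonical map `(∏_λ M_λ) ⊗_R B → ∏_λ (M_λ ⊗_R B)` for a family of right
`R`-modules and an `(R,S)`-bimodule `B`, as a map of right `S`-modules. -/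
noncomputable def canonicalM {ι' : Type u} (N : ι' → Type u)
    [∀ i, AddCommGroup (N i)] [∀ i, Module Rᵐᵒᵖ (N i)]
    (B : Type u) [AddCommGroup B] [Module R B] [Module Sᵐᵒᵖ B] [SMulCommClass R Sᵐᵒᵖ B] :
    RTensor R (∀ i, N i) B →ₗ[Sᵐᵒᵖ] ∀ i, RTensor R (N i) B :=
  LinearMap.pi fun i => mapMS R S (∀ j, N j) B (LinearMap.proj i)

end Canonical

section UnitMap

variable (M : Type u) [AddCommGroup M] [Module Rᵐᵒᵖ M]
variable (B : Type u) [AddCommGroup B] [Module R B] [Module Rᵐᵒᵖ B] [SMulCommClass R Rᵐᵒᵖ B]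

/-- For an `(R,R)`-bimodule `B` and a central-ish element `e` (e.g. `1 ∈ S` for a ring
extension `R → S`), the canonical map `M → M ⊗_R B`, `a ↦ a ⊗ e`, as a map of right
`R`-modules. -/
noncomputable def unitMap (e : B) (he : ∀ r : R, r • e = op r • e) :
    M →ₗ[Rᵐᵒᵖ] RTensor R M B where
  toFun m := rtmul R M B m e
  map_add' m m' := by
    show Submodule.Quotient.mk _ = Submodule.Quotient.mk _ + Submodule.Quotient.mk _
    rw [← Submodule.Quotient.mk_add, TensorProduct.add_tmul]
  map_smul' r m := by
    show rtmul R M B (r • m) e = r • rtmul R M B m e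
    rw [smul_rtmul]
    rw [rtmul, rtmul, Submodule.Quotient.eq]
    have : (r • e : B) = (r.unop : R) • e := (he r.unop).symm
    rw [this]
    exact Submodule.subset_span ⟨r.unop, m, e, by rw [op_unop]⟩

end UnitMap

end MTM
namespace MTM

open MulOpposite

variable (R : Type u) [Ring R] (S : Type u) [Ring S]

/-! ### pp formulas for `(R,S)`-bimodules -/

/-- The action of a formal coefficient `∑ (r,s)` of the bimodule language on an
element of an `(R,S)`-bimodule: `b ↦ ∑ r b s`. -/
def cAct (c : List (R × S)) {B : Type v} [AddCommGroup B] [Module R B] [Module Sᵐᵒᵖ B]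
    (b : B) : B :=
  (c.map fun p => p.1 • (op p.2 • b)).sum

/-- A pp formula for `(R,S)`-bimodules (equivalently, for right `Rᵒᵖ ⊗ S`-modules):
coefficients are formal sums of pairs `(r,s)`, acting by `x ↦ ∑ r x s`. -/
structure BiPP (ι : Type) : Type (max u 1) where
  κ : Type
  ε : Type
  [fintκ : Fintype κ]
  [fintε : Fintype ε]
  A : Matrix ι ε (List (R × S))
  B : Matrix κ ε (List (R × S))

attribute [instance] BiPP.fintκ BiPP.fintε

variable {R S} in
/-- Solution set of a bimodule pp formula in an `(R,S)`-bimodule. -/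
def BiPP.sol {ι : Type} [Fintype ι] (θ : BiPP R S ι) (Bm : Type v) [AddCommGroup Bm]
    [Module R Bm] [Module Sᵐᵒᵖ Bm] : Set (ι → Bm) :=
  { a | ∃ b : θ.κ → Bm, ∀ j : θ.ε,
      (∑ i, cAct R S (θ.A i j) (a i)) + (∑ k, cAct R S (θ.B k j) (b k)) = 0 }

/-- A bundled `(R,S)`-bimodule. -/
structure Bimod : Type (u + 1) where
  carrier : Type u
  [addCommGroup : AddCommGroup carrier]
  [modR : Module R carrier]
  [modSop : Module Sᵐᵒᵖ carrier]
  [smulComm : SMulCommClass R Sᵐᵒᵖ carrier]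

attribute [instance] Bimod.addCommGroup Bimod.modR Bimod.modSop Bimod.smulComm

instance : CoeSort (Bimod R S) (Type u) := ⟨Bimod.carrier⟩

/-- Bundling an `(R,S)`-bimodule. -/
def Bimod.of (B : Type u) [AddCommGroup B] [Module R B] [Module Sᵐᵒᵖ B]
    [SMulCommClass R Sᵐᵒᵖ B] : Bimod R S :=
  ⟨B⟩

/-- A pp-pair for `(R,S)`-bimodules. -/
structure BiPPPair : Type (max u 1) where
  n : ℕ
  num : BiPP R S (Fin n)
  den : BiPP R S (Fin n)
  le : ∀ Bm : Bimod R S, den.sol Bm ⊆ num.sol Bm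

variable {R S} in
/-- Closedness of a bimodule pp-pair on a bimodule. -/
def BiPPPair.ClosedOn (p : BiPPPair R S) (Bm : Type v) [AddCommGroup Bm] [Module R Bm]
    [Module Sᵐᵒᵖ Bm] : Prop :=
  p.num.sol Bm = p.den.sol Bm

/-- The class of bimodules defined by closure of a set of bimodule pp-pairs. -/
def biDefinedBy (Φ : Set (BiPPPair R S)) : Set (Bimod R S) :=
  { Bm | ∀ p ∈ Φ, p.ClosedOn Bm }

/-- Definable subcategories of the category `R-Mod-S` of `(R,S)`-bimodules. -/
def IsDefinableBi (𝓑 : Set (Bimod R S)) : Prop :=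
  ∃ Φ : Set (BiPPPair R S), 𝓑 = biDefinedBy R S Φ

/-- The smallest definable subcategory of `R-Mod-S` containing `X`. -/
def genBi (X : Set (Bimod R S)) : Set (Bimod R S) :=
  ⋂₀ { 𝓑 | IsDefinableBi R S 𝓑 ∧ X ⊆ 𝓑 }

/-- `θ ≤_𝓑 θ'` for a class `𝓑` of bimodules. -/
def BiLeOn (𝓑 : Set (Bimod R S)) {ι : Type} [Fintype ι] (θ θ' : BiPP R S ι) : Prop :=
  ∀ Bm ∈ 𝓑, θ.sol Bm ⊆ θ'.sol Bm

/-! ### Partitioned tuples, `(σ:φ)` and atomicity with respect to a bimodule -/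

/-- The index type of a `ν`-partitioned tuple: `k` blocks, the `t`-th of size `ν t`. -/
abbrev PIdx {k : ℕ} (ν : Fin k → ℕ) : Type := (t : Fin k) × Fin (ν t)

/-- The tensor product of matching partitioned tuples: the `k`-tuple
`(ā₁ ⊗ b̄₁, …, ā_k ⊗ b̄_k)` where `ā_t ⊗ b̄_t = ∑_j a_{tj} ⊗ b_{tj}`. -/
noncomputable def ptensor (M : Type u) [AddCommGroup M] [Module Rᵐᵒᵖ M] (B : Type u)
    [AddCommGroup B] [Module R B] {k : ℕ} {ν : Fin k → ℕ}
    (a : PIdx ν → M) (b : PIdx ν → B) : Fin k → RTensor R M B :=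
  fun t => ∑ j : Fin (ν t), rtmul R M B (a ⟨t, j⟩) (b ⟨t, j⟩)

variable {R}

/-- The pp-type of `ā` in `M` is generated by `φ`: `pp^M(ā) = {ψ : φ ≤ ψ}`. -/
def GeneratedBy {ι : Type} [Fintype ι] {M : Type u} [AddCommGroup M] [Module Rᵐᵒᵖ M]
    (a : ι → M) (φ : PP R ι) : Prop :=
  ∀ ψ : PP R ι, a ∈ ψ.sol M ↔ φ.Le ψ

/-- The pp-type of `ā` in `M` is `𝒳`-generated by `φ`: `pp^M(ā) = {ψ : φ ≤_𝒳 ψ}`. -/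
def GeneratedByOn (𝒳 : Set (ModuleCat.{u} Rᵐᵒᵖ)) {ι : Type} [Fintype ι] {M : Type u}
    [AddCommGroup M] [Module Rᵐᵒᵖ M] (a : ι → M) (φ : PP R ι) : Prop :=
  ∀ ψ : PP R ι, a ∈ ψ.sol M ↔ LeOn R 𝒳 φ ψ

variable (R)

/-- An assignment `(σ, φ) ↦ (σ:φ)` of a bimodule pp formula to each pp formula `σ`
for right `S`-modules (in `k` free variables) and each matching partitioned pp
formula `φ` for right `R`-modules. -/
def ColonAsgn : Type (max u 1) :=
  ∀ (k : ℕ) (ν : Fin k → ℕ), PP S (Fin k) → PP R (PIdx ν) → BiPP R S (PIdx ν)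

/-- The characterizing property of the assignment `(σ, φ) ↦ (σ:φ)`:
(1) if `ā ∈ φ(M)` and `b̄ ∈ (σ:φ)(B)` then `ā ⊗ b̄ ∈ σ(M ⊗_R B)`;
(2) if `pp^M(ā)` is generated by `φ` then `ā ⊗ b̄ ∈ σ(M ⊗_R B)` iff `b̄ ∈ (σ:φ)(B)`. -/
def ColonSpec (c : ColonAsgn R S) : Prop :=
  ∀ (k : ℕ) (ν : Fin k → ℕ) (σ : PP S (Fin k)) (φ : PP R (PIdx ν))
    (M : Type u) [AddCommGroup M] [Module Rᵐᵒᵖ M]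
    (Bm : Type u) [AddCommGroup Bm] [Module R Bm] [Module Sᵐᵒᵖ Bm]
    [SMulCommClass R Sᵐᵒᵖ Bm] (a : PIdx ν → M) (b : PIdx ν → Bm),
    (a ∈ φ.sol M → b ∈ (c k ν σ φ).sol Bm →
      ptensor R M Bm a b ∈ σ.sol (RTensor R M Bm)) ∧
    (GeneratedBy a φ →
      (ptensor R M Bm a b ∈ σ.sol (RTensor R M Bm) ↔ b ∈ (c k ν σ φ).sol Bm))

/-- `M` is atomic with respect to the `(R,S)`-bimodule `B` (relative to a choice `c`
of the assignment `(σ,φ) ↦ (σ:φ)`): for every partitioned finite tuple `ā` from `M`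
and every pp formula `σ` for right `S`-modules there is `φ ∈ pp^M(ā)` such that
`(σ:φ)(B)` is the largest among the `(σ:ψ)(B)` with `ψ ∈ pp^M(ā)`. -/
def AtomicWrt (c : ColonAsgn R S) (M : Type u) [AddCommGroup M] [Module Rᵐᵒᵖ M]
    (Bm : Type u) [AddCommGroup Bm] [Module R Bm] [Module Sᵐᵒᵖ Bm] : Prop :=
  ∀ (k : ℕ) (ν : Fin k → ℕ) (σ : PP S (Fin k)) (a : PIdx ν → M),
    ∃ φ : PP R (PIdx ν), a ∈ φ.sol M ∧
      ∀ ψ : PP R (PIdx ν), a ∈ ψ.sol M → (c k ν σ ψ).sol Bm ⊆ (c k ν σ φ).sol Bm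

/-! ### Mittag-Leffler modules, atomic modules -/

/-- `M` is Mittag-Leffler: the canonical map `M ⊗_R ∏ᵢ Lᵢ → ∏ᵢ (M ⊗_R Lᵢ)` is
injective for every family of left `R`-modules. -/
def IsML (M : Type u) [AddCommGroup M] [Module Rᵐᵒᵖ M] : Prop :=
  ∀ (ι' : Type u) (L : ι' → Type u) (_ : ∀ i, AddCommGroup (L i))
    (_ : ∀ i, Module R (L i)), Function.Injective (canonicalL R M L)

/-- `M` is `𝒳`-Mittag-Leffler for a class `𝒳` of left `R`-modules. -/
def IsMLOn (𝒳 : Set (ModuleCat.{u} R)) (M : Type u) [AddCommGroup M] [Module Rᵐᵒᵖ M] :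
    Prop :=
  ∀ (ι' : Type u) (L : ι' → Type u) (_ : ∀ i, AddCommGroup (L i))
    (_ : ∀ i, Module R (L i)),
    (∀ i, ModuleCat.of R (L i) ∈ 𝒳) → Function.Injective (canonicalL R M L)

/-- `M` is `D`-atomic: the pp-type of every finite tuple from `M` is `D`-finitely
generated. -/
def AtomicOn (D : Set (ModuleCat.{u} Rᵐᵒᵖ)) (M : Type u) [AddCommGroup M]
    [Module Rᵐᵒᵖ M] : Prop :=
  ∀ (n : ℕ) (a : Fin n → M), ∃ φ : PP R (Fin n), GeneratedByOn D a φ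

/-- The elementary dual `⟨K⟩ᵈ ⊆ Mod-R` of the definable subcategory of `R-Mod`
generated by a class `K` of left `R`-modules: it is defined by the pp-pairs for right
`R`-modules whose (elementary) dual pp-pair is closed on `⟨K⟩`. -/
def dualCat (K : Set (ModuleCat.{u} R)) : Set (ModuleCat.{u} Rᵐᵒᵖ) :=
  definedBy R { p : PPPair R |
    ∀ L ∈ genL R K, (p.num.dual).solL L = (p.den.dual).solL L }

/-! ### Pure projectivity, finite genericity, pure cogenerators -/

/-- A left `R`-module is pure-projective if it is a direct summand of a direct sum of
finitely presented left `R`-modules. -/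
def IsPureProjL (B : Type u) [AddCommGroup B] [Module R B] : Prop :=
  ∃ (ι : Type u) (_ : DecidableEq ι) (F : ι → Type u) (_ : ∀ i, AddCommGroup (F i))
    (_ : ∀ i, Module R (F i)) (_ : ∀ i, Module.FinitePresentation R (F i))
    (e : B →ₗ[R] DirectSum ι F) (p : DirectSum ι F →ₗ[R] B), p.comp e = LinearMap.id

/-- `M` is finitely generic in the definable subcategory `D`: for every pp formula
`φ` there is a tuple from `M` whose pp-type is `D`-generated by `φ`. -/
def FinGeneric (D : Set (ModuleCat.{u} Rᵐᵒᵖ)) (M : Type u) [AddCommGroup M]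
    [Module Rᵐᵒᵖ M] : Prop :=
  ModuleCat.of Rᵐᵒᵖ M ∈ D ∧
    ∀ (ι : Type) (_ : Fintype ι) (φ : PP R ι), ∃ a : ι → M, GeneratedByOn D a φ

variable {R S}

/-- The pp-type of a tuple in a bimodule is `𝓑`-generated by `θ`. -/
def BiGeneratedByOn (𝓑 : Set (Bimod R S)) {ι : Type} [Fintype ι] {Bm : Type u}
    [AddCommGroup Bm] [Module R Bm] [Module Sᵐᵒᵖ Bm] (b : ι → Bm) (θ : BiPP R S ι) :
    Prop :=
  ∀ θ' : BiPP R S ι, b ∈ θ'.sol Bm ↔ BiLeOn R S 𝓑 θ θ'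

variable (R S)

/-- A bimodule is finitely generic in a definable subcategory `𝓑` of `R-Mod-S`. -/
def FinGenericBi (𝓑 : Set (Bimod R S)) (Bm : Type u) [AddCommGroup Bm] [Module R Bm]
    [Module Sᵐᵒᵖ Bm] [SMulCommClass R Sᵐᵒᵖ Bm] : Prop :=
  Bimod.of R S Bm ∈ 𝓑 ∧
    ∀ (ι : Type) (_ : Fintype ι) (θ : BiPP R S ι), ∃ b : ι → Bm, BiGeneratedByOn 𝓑 b θ

end MTM
namespace MTM

open MulOpposite

variable (R : Type u) [Ring R] (S : Type u) [Ring S]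

/-! ### Tensor extension of definable subcategories -/

section TensorExt

variable (B : Type u) [AddCommGroup B] [Module R B] [Module Sᵐᵒᵖ B] [SMulCommClass R Sᵐᵒᵖ B]

/-- The set `{M ⊗_R B : M ∈ D}` of right `S`-modules. -/
noncomputable def tensorExtSet (D : Set (ModuleCat.{u} Rᵐᵒᵖ)) : Set (ModuleCat.{u} Sᵐᵒᵖ) :=
  { N | ∃ M ∈ D, N = ModuleCat.of Sᵐᵒᵖ (RTensor R M B) }

/-- The tensor extension `D ⊗_R B`: the definable subcategory of `Mod-S` generated by
`{M ⊗_R B : M ∈ D}`. -/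
noncomputable def tensorExt (D : Set (ModuleCat.{u} Rᵐᵒᵖ)) : Set (ModuleCat.{u} Sᵐᵒᵖ) :=
  gen S (tensorExtSet R S B D)

end TensorExt

/-- `D ⊗ 𝓑` for a definable subcategory `D` of `Mod-R` and a definable subcategory
`𝓑` of `R-Mod-S`: the definable subcategory of `Mod-S` generated by the modules
`M ⊗_R B` with `M ∈ D`, `B ∈ 𝓑`. -/
noncomputable def tensorProd (D : Set (ModuleCat.{u} Rᵐᵒᵖ)) (𝓑 : Set (Bimod R S)) :
    Set (ModuleCat.{u} Sᵐᵒᵖ) :=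
  gen S { N | ∃ M ∈ D, ∃ Bm ∈ 𝓑, N = ModuleCat.of Sᵐᵒᵖ (RTensor R M Bm) }

/-! ### Directed colimits -/

open CategoryTheory CategoryTheory.Limits in
/-- `M` is a directed colimit of modules satisfying `P`. -/
def IsDirectedColimitOf (M : ModuleCat.{u} Rᵐᵒᵖ) (P : ModuleCat.{u} Rᵐᵒᵖ → Prop) :
    Prop :=
  ∃ (J : Type u) (_ : Preorder J) (_ : IsDirected J (· ≤ ·)) (_ : Nonempty J)
    (F : J ⥤ ModuleCat.{u} Rᵐᵒᵖ) (c : Cocone F),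
    Nonempty (IsColimit c) ∧ Nonempty (c.pt ≅ M) ∧ ∀ j, P (F.obj j)

/-! ### Elementary embeddings of rings -/

open FirstOrder in
/-- `f : R →+* S` is an elementary embedding of rings: there is a model-theoretic
elementary embedding (for the first-order language of rings) whose underlying
function is `f`.  (Elementary embeddings preserve and reflect all first-order
formulas at all tuples of parameters from `R`.) -/
def IsElemRingEmb (f : R →+* S) : Prop :=
  letI := FirstOrder.Ring.compatibleRingOfRing R
  letI := FirstOrder.Ring.compatibleRingOfRing S
  ∃ F : Language.ring.ElementaryEmbedding R S, ∀ r : R, F r = f r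

/-! ### Bimodule structures along a ring homomorphism -/

section AlongHom

variable (f : R →+* S)

/-- The left `R`-module structure on `S` along `f`. -/
def modLeft : Module R S := Module.compHom S f

/-- The right `R`-module structure on `S` along `f`. -/
def modRight : Module Rᵐᵒᵖ S := Module.compHom S (RingHom.op f)

/-- `S` is an `(R,S)`-bimodule along `f`. -/
theorem smulComm_RS :
    letI := modLeft R S f
    SMulCommClass R Sᵐᵒᵖ S := by
  letI := modLeft R S f
  constructor
  intro r s x
  show f r * (x * s.unop) = (f r * x) * s.unop
  rw [mul_assoc]

/-- `S` is an `(R,R)`-bimodule along `f`. -/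
theorem smulComm_RR :
    letI := modLeft R S f
    letI := modRight R S f
    SMulCommClass R Rᵐᵒᵖ S := by
  letI := modLeft R S f
  letI := modRight R S f
  constructor
  intro r r' x
  show f r * (x * f r'.unop) = (f r * x) * f r'.unop
  rw [mul_assoc]

end AlongHom

end MTM
namespace MTM

open MulOpposite

variable (R : Type u) [Ring R] (S : Type u) [Ring S]

/-- A pure embedding of `(R,S)`-bimodules: an injective map of bimodules which
reflects solution sets of bimodule pp formulas. -/
def IsBiPureEmb {B B' : Type u} [AddCommGroup B] [Module R B] [Module Sᵐᵒᵖ B]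
    [AddCommGroup B'] [Module R B'] [Module Sᵐᵒᵖ B']
    (g : B →ₗ[R] B') (_ : ∀ (s : Sᵐᵒᵖ) (b : B), g (s • b) = s • g b) : Prop :=
  Function.Injective g ∧
    ∀ (ι : Type) (_ : Fintype ι) (θ : BiPP R S ι) (a : ι → B),
      (fun i => g (a i)) ∈ θ.sol B' → a ∈ θ.sol B

/-- The ring `S`, viewed as an `(R,S)`-bimodule (and as an `(R,R)`-bimodule) along a
ring homomorphism `f : R →+* S`. -/
def SAlong (f : R →+* S) : Type u := S

namespace SAlong

variable (f : R →+* S)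

instance : AddCommGroup (SAlong R S f) := inferInstanceAs (AddCommGroup S)
instance : Module R (SAlong R S f) := Module.compHom S f
instance : Module Sᵐᵒᵖ (SAlong R S f) := inferInstanceAs (Module Sᵐᵒᵖ S)
instance : Module Rᵐᵒᵖ (SAlong R S f) := Module.compHom S (RingHom.op f)

instance : SMulCommClass R Sᵐᵒᵖ (SAlong R S f) := smulComm_RS R S f

instance : SMulCommClass R Rᵐᵒᵖ (SAlong R S f) := smulComm_RR R S f

/-- The element `1 ∈ S`. -/
def one : SAlong R S f := (1 : S)

theorem smul_one : ∀ r : R, r • (one R S f) = op r • (one R S f) := by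
  intro r
  show f r * (1 : S) = (1 : S) * f r
  rw [mul_one, one_mul]

end SAlong

end MTM
-- ===================== Auxiliary development for Statement 15 =====================
namespace MTM

open MulOpposite TensorProduct

section ZLemmas

universe w
variable {M : Type w} [AddCommGroup M] {N : Type w} [AddCommGroup N]

theorem exists_fin_sum_tmul (x : TensorProduct ℤ M N) :
    ∃ (n : ℕ) (m : Fin n → M) (b : Fin n → N), x = ∑ i, m i ⊗ₜ[ℤ] b i := by
  obtain ⟨S, hS⟩ := TensorProduct.exists_finset x
  refine ⟨S.card, fun i => ((S.equivFin.symm i : M × N)).1,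
    fun i => ((S.equivFin.symm i : M × N)).2, ?_⟩
  rw [hS, ← Finset.sum_coe_sort S]
  exact Fintype.sum_equiv S.equivFin _ _ (fun x => by simp only [Equiv.symm_apply_apply])

theorem zcriterion {ι : Type} [Fintype ι] (m : ι → M) (n : ι → N)
    (h : ∑ i, m i ⊗ₜ[ℤ] n i = (0 : TensorProduct ℤ M N)) :
    ∃ (G Q : ℕ) (g : Fin G → M) (z : (ι ⊕ Fin G) → Fin Q → ℤ) (d : Fin Q → N),
      (∀ q, ∑ t, z t q • Sum.elim m g t = 0) ∧
      (∀ t, Sum.elim n (fun _ => (0 : N)) t = ∑ q, z t q • d q) := by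
  classical
  set K := LinearMap.ker (Finsupp.linearCombination ℤ (id : N → N)) with hK
  have hπs : Function.Surjective (Finsupp.linearCombination ℤ (id : N → N)) := fun y =>
    ⟨Finsupp.single y 1, by simp⟩
  have hexact : Function.Exact K.subtype (Finsupp.linearCombination ℤ (id : N → N)) := by
    rw [LinearMap.exact_iff, Submodule.range_subtype]
  have hx : (LinearMap.lTensor M (Finsupp.linearCombination ℤ (id : N → N)))
      (∑ i, m i ⊗ₜ[ℤ] (Finsupp.single (n i) 1 : N →₀ ℤ)) = 0 := by
    rw [map_sum]
    simp only [LinearMap.lTensor_tmul, Finsupp.linearCombination_single, one_smul, id_eq]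
    exact h
  obtain ⟨w, hw⟩ := (lTensor_exact M hexact hπs _).mp hx
  obtain ⟨S, hS⟩ := TensorProduct.exists_finset w
  set u : Fin S.card → M := fun l => ((S.equivFin.symm l : M × K)).1 with hu
  set kk : Fin S.card → K := fun l => ((S.equivFin.symm l : M × K)).2 with hkk
  have hw2 : ∑ i, m i ⊗ₜ[ℤ] (Finsupp.single (n i) 1 : N →₀ ℤ)
      = ∑ l, u l ⊗ₜ[ℤ] ((kk l : N →₀ ℤ)) := by
    rw [← hw, hS, map_sum, ← Finset.sum_coe_sort S]
    refine Fintype.sum_equiv S.equivFin _ _ (fun x => ?_)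
    simp only [Equiv.symm_apply_apply, LinearMap.lTensor_tmul, hu, hkk]
    rfl
  set Y : Finset N := (Finset.univ.image n) ∪ Finset.univ.biUnion (fun l => ((kk l : N →₀ ℤ)).support)
    with hY
  set d : Fin Y.card → N := fun q => (Y.equivFin.symm q : N) with hd
  have hdinj : Function.Injective d := fun a b hab => by
    apply Y.equivFin.symm.injective; exact Subtype.ext hab
  refine ⟨S.card, Y.card, u,
    Sum.elim (fun i q => if n i = d q then 1 else 0) (fun l q => -((kk l : N →₀ ℤ) (d q))),
    d, ?_, ?_⟩
  · intro q
    have key := congrArg ((TensorProduct.rid ℤ M).toLinearMap ∘ₗ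
      LinearMap.lTensor M (Finsupp.lapply (d q))) hw2
    rw [map_sum, map_sum] at key
    simp only [LinearMap.comp_apply, LinearMap.lTensor_tmul, LinearEquiv.coe_coe,
      TensorProduct.rid_tmul, Finsupp.lapply_apply, Finsupp.single_apply] at key
    rw [Fintype.sum_sum_type]
    simp only [Sum.elim_inl, Sum.elim_inr, neg_smul]
    rw [Finset.sum_neg_distrib, ← sub_eq_add_neg, sub_eq_zero]
    convert key using 2
  · intro t
    match t with
    | Sum.inl i =>
      simp only [Sum.elim_inl]
      have hmem : n i ∈ Y := by
        rw [hY]; exact Finset.mem_union_left _ (Finset.mem_image_of_mem n (Finset.mem_univ i))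
      rw [Finset.sum_eq_single (Y.equivFin ⟨n i, hmem⟩)]
      · have hde : d (Y.equivFin ⟨n i, hmem⟩) = n i := by simp [hd]
        rw [hde, if_pos rfl, one_smul]
      · intro q _ hq
        rw [if_neg, zero_smul]
        intro hcon
        refine hq (hdinj ?_)
        rw [← hcon]
        simp [hd]
      · intro hcon; exact absurd (Finset.mem_univ _) hcon
    | Sum.inr l =>
      simp only [Sum.elim_inr, neg_smul, Finset.sum_neg_distrib]
      have hsupp : ((kk l : N →₀ ℤ)).support ⊆ Y := by
        intro y hy
        rw [hY]
        exact Finset.mem_union_right _ (Finset.mem_biUnion.mpr ⟨l, Finset.mem_univ l, hy⟩)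
      have h1 : ∑ q, ((kk l : N →₀ ℤ) (d q)) • d q = ∑ y ∈ Y, ((kk l : N →₀ ℤ) y) • y := by
        rw [← Finset.sum_coe_sort Y (fun y => ((kk l : N →₀ ℤ) y) • (y : N))]
        exact Fintype.sum_equiv Y.equivFin.symm _ _ (fun q => rfl)
      rw [h1]
      have h2 : ∑ y ∈ Y, ((kk l : N →₀ ℤ) y) • y
          = Finsupp.linearCombination ℤ (id : N → N) (kk l : N →₀ ℤ) := by
        rw [Finsupp.linearCombination_apply_of_mem_supported ℤ (s := Y)]
        · rfl
        · exact hsupp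
      rw [h2]
      have h3 : Finsupp.linearCombination ℤ (id : N → N) (kk l : N →₀ ℤ) = 0 := (kk l).2
      rw [h3, neg_zero]

theorem sum_pad {α : Type w} [AddCommMonoid α] {n N : ℕ} (h : n ≤ N) (f : ℕ → α)
    (hf : ∀ i, n ≤ i → f i = 0) :
    ∑ i : Fin N, f (i : ℕ) = ∑ i : Fin n, f (i : ℕ) := by
  rw [Fin.sum_univ_eq_sum_range f N, Fin.sum_univ_eq_sum_range f n]
  exact (Finset.sum_subset (Finset.range_subset_range.mpr h)
    (fun i _ hi => hf i (by simpa using hi))).symm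

end ZLemmas

section RTLemmas

variable (R : Type u) [Ring R] (S : Type u) [Ring S]
variable (M : Type u) [AddCommGroup M] [Module Rᵐᵒᵖ M]
variable (B : Type u) [AddCommGroup B] [Module R B]

theorem mk_sum {ι : Type} [Fintype ι] (f : ι → TensorProduct ℤ M B) :
    (Submodule.Quotient.mk (∑ i, f i) : RTensor R M B) = ∑ i, Submodule.Quotient.mk (f i) :=
  map_sum (tensorRel R M B).mkQ f Finset.univ

theorem exists_rtmul_decomp (x : RTensor R M B) :
    ∃ (n : ℕ) (m : Fin n → M) (b : Fin n → B), x = ∑ i, rtmul R M B (m i) (b i) := by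
  obtain ⟨y, rfl⟩ := Submodule.Quotient.mk_surjective _ x
  obtain ⟨n, m, b, hy⟩ := exists_fin_sum_tmul y
  exact ⟨n, m, b, by rw [hy, mk_sum]; rfl⟩

theorem exists_ptensor {k : ℕ} (x : Fin k → RTensor R M B) :
    ∃ (ν : Fin k → ℕ) (a : PIdx ν → M) (b : PIdx ν → B), x = ptensor R M B a b := by
  choose n m b h using fun t => exists_rtmul_decomp R M B (x t)
  exact ⟨n, fun p => m p.1 p.2, fun p => b p.1 p.2, funext fun t => by rw [h t]; rfl⟩

theorem tensorRel_decomp {t : TensorProduct ℤ M B} (ht : t ∈ tensorRel R M B) :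
    ∃ (n : ℕ) (r : Fin n → R) (mm : Fin n → M) (bb : Fin n → B),
      t = ∑ i, ((op (r i) • mm i) ⊗ₜ[ℤ] bb i - mm i ⊗ₜ[ℤ] (r i • bb i)) := by
  set P : Submodule ℤ (TensorProduct ℤ M B) :=
    { carrier := { t | ∃ (l : List (R × M × B)),
        t = (l.map fun x => (op x.1 • x.2.1) ⊗ₜ[ℤ] x.2.2 - x.2.1 ⊗ₜ[ℤ] (x.1 • x.2.2)).sum }
      add_mem' := by
        rintro x y ⟨lx, rfl⟩ ⟨ly, rfl⟩
        exact ⟨lx ++ ly, by rw [List.map_append, List.sum_append]⟩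
      zero_mem' := ⟨[], rfl⟩
      smul_mem' := by
        rintro z x ⟨l, rfl⟩
        refine ⟨l.map fun x => (x.1, z • x.2.1, x.2.2), ?_⟩
        rw [List.smul_sum, List.map_map, List.map_map]
        congr 1
        refine List.map_congr_left (fun x _ => ?_)
        simp only [Function.comp_apply, smul_sub, TensorProduct.smul_tmul']
        rw [smul_comm z (op x.1) x.2.1] } with hP
  have htP : t ∈ P := by
    rw [tensorRel] at ht
    refine Submodule.span_le.mpr ?_ ht
    rintro x ⟨r, m, b, rfl⟩
    exact ⟨[(r, m, b)], by simp⟩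
  obtain ⟨l, rfl⟩ := htP
  refine ⟨l.length, fun i => (l.get i).1, fun i => (l.get i).2.1, fun i => (l.get i).2.2, ?_⟩
  have : ∀ (f : R × M × B → TensorProduct ℤ M B),
      (l.map f).sum = ∑ i : Fin l.length, f (l.get i) := by
    intro f
    conv_lhs => rw [← List.ofFn_get l]
    rw [List.map_ofFn, List.sum_ofFn]
    rfl
  exact this _

end RTLemmas


section Colon

variable (R : Type u) [Ring R] (S : Type u) [Ring S]

/-- The combined tensor-term index. -/
abbrev TIdx (P W : Type) (NL NG : ℕ) : Type := ((P ⊕ W) ⊕ (Fin NL ⊕ Fin NL)) ⊕ Fin NG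

/-- Bound-variable index for `phiData`. -/
abbrev KPhi (E W : Type) (NL NG : ℕ) : Type := W ⊕ ((E × Fin NL) ⊕ (E × Fin NG))

/-- Bound-variable index for `thetaData`. -/
abbrev KTheta (E W : Type) (NL NQ : ℕ) : Type := W ⊕ ((E × Fin NL) ⊕ (E × Fin NQ))

section Elems

variable {E P W : Type} (NL NQ NG : ℕ)
variable {M : Type u} [AddCommGroup M] [Module Rᵐᵒᵖ M]
variable {B : Type u} [AddCommGroup B] [Module R B] [Module Sᵐᵒᵖ B]

/-- The `M`-side element attached to a tensor-term index. -/
def mElem (r : E → Fin NL → R) (a : P → M) (u : W → M) (mm : E → Fin NL → M)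
    (g : E → Fin NG → M) (j : E) : TIdx P W NL NG → M :=
  Sum.elim
    (Sum.elim (Sum.elim a u)
      (Sum.elim (fun i => op (-(r j i)) • mm j i) (fun i => mm j i)))
    (fun i => g j i)

/-- The `B`-side element attached to a tensor-term index. -/
def nElem (cP : E → P → S) (cW : E → W → S) (r : E → Fin NL → R)
    (b : P → B) (v : W → B) (bb : E → Fin NL → B) (j : E) : TIdx P W NL NG → B :=
  Sum.elim
    (Sum.elim (Sum.elim (fun p => op (cP j p) • b p) (fun w => op (cW j w) • v w))
      (Sum.elim (fun i => bb j i) (fun i => r j i • bb j i)))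
    (fun _ => 0)

theorem op_intsmul_one_smul (z : ℤ) (x : M) : op (z • (1 : R)) • x = z • x := by
  rw [MulOpposite.op_smul, MulOpposite.op_one, smul_assoc, one_smul]

theorem op_intsmul_smul (z : ℤ) (c : R) (x : M) : op (z • c) • x = z • (op c • x) := by
  rw [MulOpposite.op_smul, smul_assoc]

theorem intsmul_one_smul (z : ℤ) (x : B) : (z • (1 : R)) • x = z • x := by
  rw [smul_assoc, one_smul]

end Elems

section PhiData

variable {E P W : Type} [Fintype E] [Fintype P] [Fintype W] (NL NQ NG : ℕ)

open Classical in
/-- The pp formula over `R` expressing the `M`-side relations of a tensor certificate. -/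
noncomputable def phiData (r : E → Fin NL → R) (z : E → TIdx P W NL NG → Fin NQ → ℤ) :
    PP R P where
  κ := KPhi E W NL NG
  ε := E × Fin NQ
  A := fun p e => z e.1 (.inl (.inl (.inl p))) e.2 • (1 : R)
  B := fun w' e =>
    Sum.elim
      (fun w => z e.1 (.inl (.inl (.inr w))) e.2 • (1 : R))
      (Sum.elim
        (fun x => if x.1 = e.1 then
            z e.1 (.inl (.inr (.inl x.2))) e.2 • (-(r e.1 x.2))
              + z e.1 (.inl (.inr (.inr x.2))) e.2 • (1 : R)
          else 0)
        (fun x => if x.1 = e.1 then z e.1 (.inr x.2) e.2 • (1 : R) else 0))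
      w'

variable {M : Type u} [AddCommGroup M] [Module Rᵐᵒᵖ M]

theorem phi_lhs (r : E → Fin NL → R) (z : E → TIdx P W NL NG → Fin NQ → ℤ)
    (a : P → M) (wit : (W ⊕ ((E × Fin NL) ⊕ (E × Fin NG))) → M) (j : E) (q : Fin NQ) :
    (∑ p, op ((phiData R NL NQ NG r z).A p (j, q)) • a p)
      + (∑ w' : W ⊕ ((E × Fin NL) ⊕ (E × Fin NG)), op ((phiData R NL NQ NG r z).B w' (j, q)) • wit w')
    = ∑ t, z j t q • mElem R NL NG r a (fun w => wit (.inl w))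
        (fun e i => wit (.inr (.inl (e, i)))) (fun e i => wit (.inr (.inr (e, i)))) j t := by
  classical
  simp only [Fintype.sum_sum_type]
  simp only [phiData, mElem, Sum.elim_inl, Sum.elim_inr]
  -- the P block
  have hP : ∀ p, op (z j (.inl (.inl (.inl p))) q • (1 : R)) • a p
      = z j (.inl (.inl (.inl p))) q • a p := fun p => op_intsmul_one_smul R _ _
  -- the W block
  have hW : ∀ w, op (z j (.inl (.inl (.inr w))) q • (1 : R)) • wit (.inl w)
      = z j (.inl (.inl (.inr w))) q • wit (.inl w) := fun w => op_intsmul_one_smul R _ _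
  simp only [hP, hW]
  -- the mm block
  have hmm : ∑ x : E × Fin NL,
      op (if x.1 = j then
          z j (.inl (.inr (.inl x.2))) q • (-(r j x.2))
            + z j (.inl (.inr (.inr x.2))) q • (1 : R) else 0) • wit (.inr (.inl x))
      = (∑ i : Fin NL, z j (.inl (.inr (.inl i))) q • (op (-(r j i)) • wit (.inr (.inl (j, i)))))
        + ∑ i : Fin NL, z j (.inl (.inr (.inr i))) q • wit (.inr (.inl (j, i))) := by
    rw [Fintype.sum_prod_type]
    have step1 : ∀ e : E,
        (∑ i : Fin NL, op (if e = j then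
            z j (.inl (.inr (.inl i))) q • (-(r j i))
              + z j (.inl (.inr (.inr i))) q • (1 : R) else 0) • wit (.inr (.inl (e, i))))
        = if e = j then (∑ i : Fin NL,
            (z j (.inl (.inr (.inl i))) q • (op (-(r j i)) • wit (.inr (.inl (e, i))))
              + z j (.inl (.inr (.inr i))) q • wit (.inr (.inl (e, i))))) else 0 := by
      intro e
      by_cases he : e = j
      · rw [if_pos he]
        refine Finset.sum_congr rfl (fun i _ => ?_)
        rw [if_pos he, MulOpposite.op_add, add_smul, op_intsmul_smul, op_intsmul_one_smul]
      · rw [if_neg he]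
        refine Finset.sum_eq_zero (fun i _ => ?_)
        rw [if_neg he, MulOpposite.op_zero, zero_smul]
    refine Eq.trans (Finset.sum_congr rfl (fun e _ => step1 e)) ?_
    rw [Finset.sum_ite_eq' Finset.univ j, if_pos (Finset.mem_univ j), Finset.sum_add_distrib]
  -- the g block
  have hg : ∑ x : E × Fin NG,
      op (if x.1 = j then z j (.inr x.2) q • (1 : R) else 0) • wit (.inr (.inr x))
      = ∑ i : Fin NG, z j (.inr i) q • wit (.inr (.inr (j, i))) := by
    rw [Fintype.sum_prod_type]
    have step1 : ∀ e : E,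
        (∑ i : Fin NG, op (if e = j then z j (.inr i) q • (1 : R) else 0) • wit (.inr (.inr (e, i))))
        = if e = j then (∑ i : Fin NG, z j (.inr i) q • wit (.inr (.inr (e, i)))) else 0 := by
      intro e
      by_cases he : e = j
      · rw [if_pos he]
        refine Finset.sum_congr rfl (fun i _ => ?_)
        rw [if_pos he, op_intsmul_one_smul]
      · rw [if_neg he]
        refine Finset.sum_eq_zero (fun i _ => ?_)
        rw [if_neg he, MulOpposite.op_zero, zero_smul]
    refine Eq.trans (Finset.sum_congr rfl (fun e _ => step1 e)) ?_
    rw [Finset.sum_ite_eq' Finset.univ j, if_pos (Finset.mem_univ j)]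
  rw [hmm, hg]
  abel

end PhiData


section ThetaData

variable (R : Type u) [Ring R] (S : Type u) [Ring S]
variable {E P W : Type} [Fintype E] [Fintype P] [Fintype W] (NL NQ NG : ℕ)

theorem cAct_nil {B : Type u} [AddCommGroup B] [Module R B] [Module Sᵐᵒᵖ B] (b : B) :
    cAct R S [] b = 0 := rfl

theorem cAct_single {B : Type u} [AddCommGroup B] [Module R B] [Module Sᵐᵒᵖ B]
    (r0 : R) (s0 : S) (b : B) : cAct R S [(r0, s0)] b = r0 • (op s0 • b) := by
  simp [cAct]

open Classical in
/-- The bimodule pp formula expressing the `B`-side relations of a tensor certificate. -/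
noncomputable def thetaData (cP : E → P → S) (cW : E → W → S) (r : E → Fin NL → R)
    (z : E → TIdx P W NL NG → Fin NQ → ℤ) : BiPP R S P where
  κ := KTheta E W NL NQ
  ε := E × TIdx P W NL NG
  A := fun p' e =>
    Sum.elim
      (Sum.elim (Sum.elim (fun p => if p' = p then [((1 : R), cP e.1 p)] else []) (fun _ => []))
        (fun _ => []))
      (fun _ => []) e.2
  B := fun w' e =>
    Sum.elim
      (fun w0 =>
        Sum.elim
          (Sum.elim (Sum.elim (fun _ => []) (fun w => if w0 = w then [((1 : R), cW e.1 w)] else []))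
            (fun _ => []))
          (fun _ => []) e.2)
      (Sum.elim
        (fun x : E × Fin NL =>
          Sum.elim
            (Sum.elim (fun _ => [])
              (Sum.elim (fun i => if x = (e.1, i) then [((1 : R), (1 : S))] else [])
                (fun i => if x = (e.1, i) then [(r e.1 i, (1 : S))] else [])))
            (fun _ => []) e.2)
        (fun x : E × Fin NQ =>
          if x.1 = e.1 then [((-(z e.1 e.2 x.2)) • (1 : R), (1 : S))] else []))
      w'

variable {B : Type u} [AddCommGroup B] [Module R B] [Module Sᵐᵒᵖ B]

open Classical in
theorem theta_dsum (z : E → TIdx P W NL NG → Fin NQ → ℤ)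
    (dd : E × Fin NQ → B) (j : E) (t : TIdx P W NL NG) :
    ∑ x : E × Fin NQ,
        cAct R S (if x.1 = j then [((-(z j t x.2)) • (1 : R), (1 : S))] else []) (dd x)
      = -∑ q : Fin NQ, z j t q • dd (j, q) := by
  classical
  rw [Fintype.sum_prod_type]
  have step1 : ∀ e : E,
      (∑ q : Fin NQ, cAct R S (if e = j then [((-(z j t q)) • (1 : R), (1 : S))] else []) (dd (e, q)))
      = if e = j then (∑ q : Fin NQ, -(z j t q • dd (e, q))) else 0 := by
    intro e
    by_cases he : e = j
    · rw [if_pos he]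
      refine Finset.sum_congr rfl (fun q _ => ?_)
      rw [if_pos he, cAct_single, MulOpposite.op_one, one_smul, intsmul_one_smul R,
        neg_smul]
    · rw [if_neg he]
      refine Finset.sum_eq_zero (fun q _ => ?_)
      rw [if_neg he, cAct_nil]
  refine Eq.trans (Finset.sum_congr rfl (fun e _ => step1 e)) ?_
  rw [Finset.sum_ite_eq' Finset.univ j, if_pos (Finset.mem_univ j), Finset.sum_neg_distrib]

theorem theta_lhs (cP : E → P → S) (cW : E → W → S) (r : E → Fin NL → R)
    (z : E → TIdx P W NL NG → Fin NQ → ℤ)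
    (b : P → B) (wit : (W ⊕ ((E × Fin NL) ⊕ (E × Fin NQ))) → B) (j : E) (t : TIdx P W NL NG) :
    (∑ p', cAct R S ((thetaData R S NL NQ NG cP cW r z).A p' (j, t)) (b p'))
      + (∑ w' : W ⊕ ((E × Fin NL) ⊕ (E × Fin NQ)),
          cAct R S ((thetaData R S NL NQ NG cP cW r z).B w' (j, t)) (wit w'))
    = nElem R S NL NG cP cW r b (fun w => wit (.inl w)) (fun e i => wit (.inr (.inl (e, i)))) j t
      - ∑ q : Fin NQ, z j t q • wit (.inr (.inr (j, q))) := by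
  classical
  simp only [Fintype.sum_sum_type]
  simp only [thetaData, nElem, Sum.elim_inl, Sum.elim_inr]
  have hd := theta_dsum R S NL NQ NG z (fun x => wit (.inr (.inr x))) j t
  rcases t with ((p | w) | (i | i)) | i
  · -- t = il p
    simp only [Sum.elim_inl, Sum.elim_inr, cAct_nil, Finset.sum_const_zero, add_zero, zero_add]
    rw [hd]
    have hA1 : ∀ p' : P, cAct R S (if p' = p then [((1 : R), cP j p)] else []) (b p')
        = if p' = p then op (cP j p) • b p' else 0 := fun p' => by
      by_cases hp : p' = p
      · rw [if_pos hp, if_pos hp, cAct_single, one_smul]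
      · rw [if_neg hp, if_neg hp, cAct_nil]
    have hA : ∑ p' : P, cAct R S (if p' = p then [((1 : R), cP j p)] else []) (b p')
        = op (cP j p) • b p := by
      rw [Finset.sum_congr rfl (fun p' _ => hA1 p'),
        Finset.sum_ite_eq' Finset.univ p (fun p' => op (cP j p) • b p'),
        if_pos (Finset.mem_univ p)]
    rw [hA, sub_eq_add_neg]
  · -- t = iw w
    simp only [Sum.elim_inl, Sum.elim_inr, cAct_nil, Finset.sum_const_zero, add_zero, zero_add]
    rw [hd]
    have hV1 : ∀ w0 : W, cAct R S (if w0 = w then [((1 : R), cW j w)] else []) (wit (.inl w0))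
        = if w0 = w then op (cW j w) • wit (.inl w0) else 0 := fun w0 => by
      by_cases hw : w0 = w
      · rw [if_pos hw, if_pos hw, cAct_single, one_smul]
      · rw [if_neg hw, if_neg hw, cAct_nil]
    have hV : ∑ w0 : W, cAct R S (if w0 = w then [((1 : R), cW j w)] else []) (wit (.inl w0))
        = op (cW j w) • wit (.inl w) := by
      rw [Finset.sum_congr rfl (fun w0 _ => hV1 w0),
        Finset.sum_ite_eq' Finset.univ w (fun w0 => op (cW j w) • wit (.inl w0)),
        if_pos (Finset.mem_univ w)]
    rw [hV, sub_eq_add_neg]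
  · -- t = i3 i
    simp only [Sum.elim_inl, Sum.elim_inr, cAct_nil, Finset.sum_const_zero, add_zero, zero_add]
    rw [hd]
    have hbb1 : ∀ x : E × Fin NL,
        cAct R S (if x = (j, i) then [((1 : R), (1 : S))] else []) (wit (.inr (.inl x)))
        = if x = (j, i) then wit (.inr (.inl x)) else 0 := fun x => by
      by_cases hx : x = (j, i)
      · rw [if_pos hx, if_pos hx, cAct_single, MulOpposite.op_one, one_smul, one_smul]
      · rw [if_neg hx, if_neg hx, cAct_nil]
    have hbb : ∑ x : E × Fin NL,
        cAct R S (if x = (j, i) then [((1 : R), (1 : S))] else []) (wit (.inr (.inl x)))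
        = wit (.inr (.inl (j, i))) := by
      rw [Finset.sum_congr rfl (fun x _ => hbb1 x),
        Finset.sum_ite_eq' Finset.univ (j, i) (fun x => wit (.inr (.inl x))),
        if_pos (Finset.mem_univ _)]
    rw [hbb, sub_eq_add_neg]
  · -- t = i4 i
    simp only [Sum.elim_inl, Sum.elim_inr, cAct_nil, Finset.sum_const_zero, add_zero, zero_add]
    rw [hd]
    have hbb1 : ∀ x : E × Fin NL,
        cAct R S (if x = (j, i) then [(r j i, (1 : S))] else []) (wit (.inr (.inl x)))
        = if x = (j, i) then r j i • wit (.inr (.inl x)) else 0 := fun x => by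
      by_cases hx : x = (j, i)
      · rw [if_pos hx, if_pos hx, cAct_single, MulOpposite.op_one, one_smul]
      · rw [if_neg hx, if_neg hx, cAct_nil]
    have hbb : ∑ x : E × Fin NL,
        cAct R S (if x = (j, i) then [(r j i, (1 : S))] else []) (wit (.inr (.inl x)))
        = r j i • wit (.inr (.inl (j, i))) := by
      rw [Finset.sum_congr rfl (fun x _ => hbb1 x),
        Finset.sum_ite_eq' Finset.univ (j, i) (fun x => r j i • wit (.inr (.inl x))),
        if_pos (Finset.mem_univ _)]
    rw [hbb, sub_eq_add_neg]
  · -- t = i5 i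
    simp only [Sum.elim_inl, Sum.elim_inr, cAct_nil, Finset.sum_const_zero, add_zero, zero_add]
    rw [hd, zero_sub]

end ThetaData

section Bridge

variable (R : Type u) [Ring R] (S : Type u) [Ring S]
variable {E P W : Type} [Fintype E] [Fintype P] [Fintype W] (NL NQ NG : ℕ)
variable {M : Type u} [AddCommGroup M] [Module Rᵐᵒᵖ M]
variable {B : Type u} [AddCommGroup B] [Module R B] [Module Sᵐᵒᵖ B]

theorem phi_sol_intro (r : E → Fin NL → R) (z : E → TIdx P W NL NG → Fin NQ → ℤ)
    (a : P → M) (u : W → M) (mm : E → Fin NL → M) (g : E → Fin NG → M)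
    (h : ∀ j q, ∑ t, z j t q • mElem R NL NG r a u mm g j t = 0) :
    a ∈ (phiData R NL NQ NG r z).sol M :=
  ⟨Sum.elim u (Sum.elim (fun x => mm x.1 x.2) (fun x => g x.1 x.2)),
    fun e => (phi_lhs R NL NQ NG r z a
      (Sum.elim u (Sum.elim (fun x => mm x.1 x.2) (fun x => g x.1 x.2))) e.1 e.2).trans
      (h e.1 e.2)⟩

theorem phi_sol_elim (r : E → Fin NL → R) (z : E → TIdx P W NL NG → Fin NQ → ℤ)
    (a : P → M) (h : a ∈ (phiData R NL NQ NG r z).sol M) :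
    ∃ (u : W → M) (mm : E → Fin NL → M) (g : E → Fin NG → M),
      ∀ j q, ∑ t, z j t q • mElem R NL NG r a u mm g j t = 0 := by
  obtain ⟨wit, hwit⟩ := h
  exact ⟨fun w => wit (.inl w), fun e i => wit (.inr (.inl (e, i))),
    fun e i => wit (.inr (.inr (e, i))),
    fun j q => (phi_lhs R NL NQ NG r z a wit j q).symm.trans (hwit (j, q))⟩

theorem theta_sol_intro (cP : E → P → S) (cW : E → W → S) (r : E → Fin NL → R)
    (z : E → TIdx P W NL NG → Fin NQ → ℤ)
    (b : P → B) (v : W → B) (bb : E → Fin NL → B) (d : E → Fin NQ → B)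
    (h : ∀ j t, nElem R S NL NG cP cW r b v bb j t = ∑ q, z j t q • d j q) :
    b ∈ (thetaData R S NL NQ NG cP cW r z).sol B :=
  ⟨Sum.elim v (Sum.elim (fun x => bb x.1 x.2) (fun x => d x.1 x.2)),
    fun e => (theta_lhs R S NL NQ NG cP cW r z b
      (Sum.elim v (Sum.elim (fun x => bb x.1 x.2) (fun x => d x.1 x.2))) e.1 e.2).trans
      (sub_eq_zero_of_eq (h e.1 e.2))⟩

theorem theta_sol_elim (cP : E → P → S) (cW : E → W → S) (r : E → Fin NL → R)
    (z : E → TIdx P W NL NG → Fin NQ → ℤ)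
    (b : P → B) (h : b ∈ (thetaData R S NL NQ NG cP cW r z).sol B) :
    ∃ (v : W → B) (bb : E → Fin NL → B) (d : E → Fin NQ → B),
      ∀ j t, nElem R S NL NG cP cW r b v bb j t = ∑ q, z j t q • d j q := by
  obtain ⟨wit, hwit⟩ := h
  exact ⟨fun w => wit (.inl w), fun e i => wit (.inr (.inl (e, i))),
    fun e q => wit (.inr (.inr (e, q))),
    fun j t => sub_eq_zero.mp
      ((theta_lhs R S NL NQ NG cP cW r z b wit j t).symm.trans (hwit (j, t)))⟩

theorem recon
    (cP : E → P → S) (cW : E → W → S) (r : E → Fin NL → R)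
    (z : E → TIdx P W NL NG → Fin NQ → ℤ)
    (a : P → M) (u : W → M) (mm : E → Fin NL → M) (g : E → Fin NG → M)
    (b : P → B) (v : W → B) (bb : E → Fin NL → B) (d : E → Fin NQ → B)
    (hphi : ∀ j q, ∑ t, z j t q • mElem R NL NG r a u mm g j t = 0)
    (htheta : ∀ j t, nElem R S NL NG cP cW r b v bb j t = ∑ q, z j t q • d j q)
    (j : E) :
    (Submodule.Quotient.mk (∑ p, a p ⊗ₜ[ℤ] (op (cP j p) • b p)
        + ∑ w, u w ⊗ₜ[ℤ] (op (cW j w) • v w)) : RTensor R M B) = 0 := by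
  classical
  have hF : ∑ t, mElem R NL NG r a u mm g j t ⊗ₜ[ℤ] nElem R S NL NG cP cW r b v bb j t
      = (0 : TensorProduct ℤ M B) := by
    calc ∑ t, mElem R NL NG r a u mm g j t ⊗ₜ[ℤ] nElem R S NL NG cP cW r b v bb j t
        = ∑ t, ∑ q, (z j t q • mElem R NL NG r a u mm g j t) ⊗ₜ[ℤ] d j q := by
          refine Finset.sum_congr rfl (fun t _ => ?_)
          rw [htheta j t, TensorProduct.tmul_sum]
          refine Finset.sum_congr rfl (fun q _ => ?_)
          rw [TensorProduct.tmul_smul, TensorProduct.smul_tmul']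
      _ = ∑ q, (∑ t, z j t q • mElem R NL NG r a u mm g j t) ⊗ₜ[ℤ] d j q := by
          rw [Finset.sum_comm]
          exact Finset.sum_congr rfl (fun q _ => (TensorProduct.sum_tmul _ _ _).symm)
      _ = 0 := by
          refine Finset.sum_eq_zero (fun q _ => ?_)
          rw [hphi j q, TensorProduct.zero_tmul]
  have hsplit : ∑ t, mElem R NL NG r a u mm g j t ⊗ₜ[ℤ] nElem R S NL NG cP cW r b v bb j t
      = (∑ p, a p ⊗ₜ[ℤ] (op (cP j p) • b p) + ∑ w, u w ⊗ₜ[ℤ] (op (cW j w) • v w))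
        + ((∑ i, (op (-(r j i)) • mm j i) ⊗ₜ[ℤ] bb j i)
          + ∑ i, mm j i ⊗ₜ[ℤ] (r j i • bb j i)) := by
    simp only [Fintype.sum_sum_type, mElem, nElem, Sum.elim_inl, Sum.elim_inr,
      TensorProduct.tmul_zero, Finset.sum_const_zero, add_zero]
  have hneg : ∑ i, (op (-(r j i)) • mm j i) ⊗ₜ[ℤ] bb j i
      = -∑ i, (op (r j i) • mm j i) ⊗ₜ[ℤ] bb j i := by
    rw [← Finset.sum_neg_distrib]
    refine Finset.sum_congr rfl (fun i _ => ?_)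
    rw [MulOpposite.op_neg, neg_smul, TensorProduct.neg_tmul]
  have hmem : (∑ p, a p ⊗ₜ[ℤ] (op (cP j p) • b p) + ∑ w, u w ⊗ₜ[ℤ] (op (cW j w) • v w))
      ∈ tensorRel R M B := by
    have h1 : (∑ p, a p ⊗ₜ[ℤ] (op (cP j p) • b p) + ∑ w, u w ⊗ₜ[ℤ] (op (cW j w) • v w))
        = (∑ i, (op (r j i) • mm j i) ⊗ₜ[ℤ] bb j i) - ∑ i, mm j i ⊗ₜ[ℤ] (r j i • bb j i) := by
      have := hsplit.symm.trans hF
      rw [hneg] at this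
      have h2 : (∑ p, a p ⊗ₜ[ℤ] (op (cP j p) • b p) + ∑ w, u w ⊗ₜ[ℤ] (op (cW j w) • v w))
          = ((∑ p, a p ⊗ₜ[ℤ] (op (cP j p) • b p) + ∑ w, u w ⊗ₜ[ℤ] (op (cW j w) • v w))
            + ((-∑ i, (op (r j i) • mm j i) ⊗ₜ[ℤ] bb j i) + ∑ i, mm j i ⊗ₜ[ℤ] (r j i • bb j i)))
            + ((∑ i, (op (r j i) • mm j i) ⊗ₜ[ℤ] bb j i) - ∑ i, mm j i ⊗ₜ[ℤ] (r j i • bb j i)) := by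
        abel
      rw [h2, this, zero_add]
    rw [h1, ← Finset.sum_sub_distrib]
    exact Submodule.sum_mem _ (fun i _ => Submodule.subset_span ⟨r j i, mm j i, bb j i, rfl⟩)
  exact (Submodule.Quotient.mk_eq_zero _).mpr hmem

end Bridge

section SigmaLhs

variable (R : Type u) [Ring R] (S : Type u) [Ring S]
variable {k : ℕ} (σ : PP S (Fin k)) {ν : Fin k → ℕ}
variable (M : Type u) [AddCommGroup M] [Module Rᵐᵒᵖ M]
variable (B : Type u) [AddCommGroup B] [Module R B] [Module Sᵐᵒᵖ B] [SMulCommClass R Sᵐᵒᵖ B]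

theorem sigma_lhs (nW : σ.κ → ℕ) (a : PIdx ν → M) (b : PIdx ν → B)
    (u : (Σ k', Fin (nW k')) → M) (v : (Σ k', Fin (nW k')) → B) (j : σ.ε) :
    (∑ i, op (σ.A i j) • ptensor R M B a b i)
      + (∑ k', op (σ.B k' j) • ∑ j' : Fin (nW k'), rtmul R M B (u ⟨k', j'⟩) (v ⟨k', j'⟩))
    = Submodule.Quotient.mk (∑ p : PIdx ν, a p ⊗ₜ[ℤ] (op (σ.A p.1 j) • b p)
        + ∑ w : Σ k', Fin (nW k'), u w ⊗ₜ[ℤ] (op (σ.B w.1 j) • v w)) := by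
  rw [Submodule.Quotient.mk_add, mk_sum, mk_sum]
  congr 1
  · calc ∑ i, op (σ.A i j) • ptensor R M B a b i
        = ∑ i, ∑ j' : Fin (ν i), rtmul R M B (a ⟨i, j'⟩) (op (σ.A i j) • b ⟨i, j'⟩) := by
          refine Finset.sum_congr rfl (fun i _ => ?_)
          rw [ptensor, Finset.smul_sum]
          rfl
      _ = ∑ p : PIdx ν, rtmul R M B (a p) (op (σ.A p.1 j) • b p) := by
          rw [← Finset.univ_sigma_univ, Finset.sum_sigma]
      _ = ∑ p : PIdx ν, (Submodule.Quotient.mk (a p ⊗ₜ[ℤ] (op (σ.A p.1 j) • b p))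
            : RTensor R M B) := rfl
  · calc ∑ k', op (σ.B k' j) • ∑ j' : Fin (nW k'), rtmul R M B (u ⟨k', j'⟩) (v ⟨k', j'⟩)
        = ∑ k', ∑ j' : Fin (nW k'), rtmul R M B (u ⟨k', j'⟩) (op (σ.B k' j) • v ⟨k', j'⟩) := by
          refine Finset.sum_congr rfl (fun k' _ => ?_)
          rw [Finset.smul_sum]
          rfl
      _ = ∑ w : Σ k', Fin (nW k'), rtmul R M B (u w) (op (σ.B w.1 j) • v w) := by
          rw [← Finset.univ_sigma_univ, Finset.sum_sigma]
      _ = ∑ w : Σ k', Fin (nW k'), (Submodule.Quotient.mk (u w ⊗ₜ[ℤ] (op (σ.B w.1 j) • v w))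
            : RTensor R M B) := rfl

end SigmaLhs

section Key2

variable (R : Type u) [Ring R] (S : Type u) [Ring S]

theorem key2 {k : ℕ} (σ : PP S (Fin k)) {ν : Fin k → ℕ}
    (M : Type u) [AddCommGroup M] [Module Rᵐᵒᵖ M]
    (B : Type u) [AddCommGroup B] [Module R B] [Module Sᵐᵒᵖ B] [SMulCommClass R Sᵐᵒᵖ B]
    (a : PIdx ν → M) (b : PIdx ν → B)
    (h : ptensor R M B a b ∈ σ.sol (RTensor R M B)) :
    ∃ (φ : PP R (PIdx ν)) (θ : BiPP R S (PIdx ν)),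
      a ∈ φ.sol M ∧ b ∈ θ.sol B ∧
      ∀ (M' : Type u) [AddCommGroup M'] [Module Rᵐᵒᵖ M']
        (B' : Type u) [AddCommGroup B'] [Module R B'] [Module Sᵐᵒᵖ B']
        [SMulCommClass R Sᵐᵒᵖ B'] (a' : PIdx ν → M') (b' : PIdx ν → B'),
        a' ∈ φ.sol M' → b' ∈ θ.sol B' →
        ptensor R M' B' a' b' ∈ σ.sol (RTensor R M' B') := by
  classical
  obtain ⟨w, hw⟩ := h
  choose nW u0 v0 hw0 using fun k' => exists_rtmul_decomp R M B (w k')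
  have heq : ∀ j : σ.ε,
      (Submodule.Quotient.mk (∑ p : PIdx ν, a p ⊗ₜ[ℤ] (op (σ.A p.1 j) • b p)
        + ∑ w' : Σ k', Fin (nW k'), u0 w'.1 w'.2 ⊗ₜ[ℤ] (op (σ.B w'.1 j) • v0 w'.1 w'.2))
        : RTensor R M B) = 0 := by
    intro j
    have hfinal : (∑ i, op (σ.A i j) • ptensor R M B a b i)
        + (∑ k', op (σ.B k' j) • ∑ j' : Fin (nW k'), rtmul R M B (u0 k' j') (v0 k' j')) = 0 := by
      have h2 : (∑ k' : σ.κ, op (σ.B k' j) • ∑ j' : Fin (nW k'), rtmul R M B (u0 k' j') (v0 k' j'))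
          = ∑ k', op (σ.B k' j) • w k' :=
        Finset.sum_congr rfl (fun k' _ => congrArg _ (hw0 k').symm)
      rw [h2]
      exact hw j
    exact (sigma_lhs R S σ M B nW a b (fun w' => u0 w'.1 w'.2) (fun w' => v0 w'.1 w'.2)
      j).symm.trans hfinal
  have hrel := fun j => (Submodule.Quotient.mk_eq_zero _).mp (heq j)
  choose nL r0 mm0 bb0 hL0 using fun j => tensorRel_decomp R M B (hrel j)
  set NL := Finset.univ.sup nL with hNLdef
  have hnL : ∀ j, nL j ≤ NL := fun j => Finset.le_sup (Finset.mem_univ j)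
  set rr : σ.ε → Fin NL → R :=
    (fun j i => if h' : (i : ℕ) < nL j then r0 j ⟨i, h'⟩ else 0) with hrrdef
  set mm : σ.ε → Fin NL → M :=
    (fun j i => if h' : (i : ℕ) < nL j then mm0 j ⟨i, h'⟩ else 0) with hmmdef
  set bb : σ.ε → Fin NL → B :=
    (fun j i => if h' : (i : ℕ) < nL j then bb0 j ⟨i, h'⟩ else 0) with hbbdef
  have hL : ∀ j, (∑ p : PIdx ν, a p ⊗ₜ[ℤ] (op (σ.A p.1 j) • b p)
      + ∑ w' : Σ k', Fin (nW k'), u0 w'.1 w'.2 ⊗ₜ[ℤ] (op (σ.B w'.1 j) • v0 w'.1 w'.2))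
      = ∑ i : Fin NL, ((op (rr j i) • mm j i) ⊗ₜ[ℤ] bb j i
          - mm j i ⊗ₜ[ℤ] (rr j i • bb j i)) := by
    intro j
    rw [hL0 j]
    have hterm : ∀ i : Fin NL,
        ((op (rr j i) • mm j i) ⊗ₜ[ℤ] bb j i - mm j i ⊗ₜ[ℤ] (rr j i • bb j i))
        = (fun x : ℕ => if h' : x < nL j then
            ((op (r0 j ⟨x, h'⟩) • mm0 j ⟨x, h'⟩) ⊗ₜ[ℤ] bb0 j ⟨x, h'⟩
              - mm0 j ⟨x, h'⟩ ⊗ₜ[ℤ] (r0 j ⟨x, h'⟩ • bb0 j ⟨x, h'⟩)) else 0) (i : ℕ) := by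
      intro i
      by_cases h' : (i : ℕ) < nL j
      · simp only [hrrdef, hmmdef, hbbdef, dif_pos h']
      · simp only [hrrdef, hmmdef, hbbdef, dif_neg h']
        simp
    rw [Finset.sum_congr rfl (fun i _ => hterm i),
      sum_pad (hnL j) (fun x : ℕ => if h' : x < nL j then
        ((op (r0 j ⟨x, h'⟩) • mm0 j ⟨x, h'⟩) ⊗ₜ[ℤ] bb0 j ⟨x, h'⟩
          - mm0 j ⟨x, h'⟩ ⊗ₜ[ℤ] (r0 j ⟨x, h'⟩ • bb0 j ⟨x, h'⟩)) else 0)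
      (fun x hx => dif_neg (not_lt.mpr hx))]
    refine Finset.sum_congr rfl (fun i _ => ?_)
    rw [dif_pos i.2]
  -- the tensor families
  set mFam : (j : σ.ε) → ((PIdx ν ⊕ (Σ k', Fin (nW k'))) ⊕ (Fin NL ⊕ Fin NL)) → M :=
    (fun j => Sum.elim (Sum.elim a (fun w' => u0 w'.1 w'.2))
      (Sum.elim (fun i => op (-(rr j i)) • mm j i) (fun i => mm j i))) with hmFamdef
  set nFam : (j : σ.ε) → ((PIdx ν ⊕ (Σ k', Fin (nW k'))) ⊕ (Fin NL ⊕ Fin NL)) → B :=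
    (fun j => Sum.elim
      (Sum.elim (fun p => op (σ.A p.1 j) • b p) (fun w' => op (σ.B w'.1 j) • v0 w'.1 w'.2))
      (Sum.elim (fun i => bb j i) (fun i => rr j i • bb j i))) with hnFamdef
  have hT : ∀ j, ∑ t, mFam j t ⊗ₜ[ℤ] nFam j t = (0 : TensorProduct ℤ M B) := by
    intro j
    simp only [hmFamdef, hnFamdef]
    simp only [Fintype.sum_sum_type, Sum.elim_inl, Sum.elim_inr]
    have hneg : ∑ i : Fin NL, (op (-(rr j i)) • mm j i) ⊗ₜ[ℤ] bb j i
        = -∑ i : Fin NL, (op (rr j i) • mm j i) ⊗ₜ[ℤ] bb j i := by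
      rw [← Finset.sum_neg_distrib]
      exact Finset.sum_congr rfl (fun i _ => by
        rw [MulOpposite.op_neg, neg_smul, TensorProduct.neg_tmul])
    rw [hneg]
    have hLj := hL j
    rw [Finset.sum_sub_distrib] at hLj
    rw [hLj]
    abel
  choose G0 Q0 g0 z0 d0 hz1 hz2 using fun j => zcriterion (mFam j) (nFam j) (hT j)
  set NG := Finset.univ.sup G0 with hNGdef
  set NQ := Finset.univ.sup Q0 with hNQdef
  have hG0 : ∀ j, G0 j ≤ NG := fun j => Finset.le_sup (Finset.mem_univ j)
  have hQ0 : ∀ j, Q0 j ≤ NQ := fun j => Finset.le_sup (Finset.mem_univ j)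
  set g : σ.ε → Fin NG → M :=
    (fun j i => if h' : (i : ℕ) < G0 j then g0 j ⟨i, h'⟩ else 0) with hgdef
  set d : σ.ε → Fin NQ → B :=
    (fun j q => if h' : (q : ℕ) < Q0 j then d0 j ⟨q, h'⟩ else 0) with hddef
  set z : σ.ε → TIdx (PIdx ν) (Σ k', Fin (nW k')) NL NG → Fin NQ → ℤ :=
    (fun j t q =>
      if hq : (q : ℕ) < Q0 j then
        Sum.elim (fun t0 => z0 j (Sum.inl t0) ⟨q, hq⟩)
          (fun i : Fin NG => if hi : (i : ℕ) < G0 j then z0 j (Sum.inr ⟨i, hi⟩) ⟨q, hq⟩ else 0) t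
      else 0) with hzdef
  have hphi : ∀ j q, ∑ t, z j t q • mElem R NL NG rr a (fun w' => u0 w'.1 w'.2) mm g j t = 0 := by
    intro j q
    by_cases hq : (q : ℕ) < Q0 j
    · have hz := hz1 j ⟨(q : ℕ), hq⟩
      rw [Fintype.sum_sum_type] at hz
      simp only [Sum.elim_inl, Sum.elim_inr] at hz
      rw [Fintype.sum_sum_type]
      have e1 : ∑ t0 : (PIdx ν ⊕ (Σ k', Fin (nW k'))) ⊕ (Fin NL ⊕ Fin NL),
          z j (Sum.inl t0) q • mElem R NL NG rr a (fun w' => u0 w'.1 w'.2) mm g j (Sum.inl t0)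
          = ∑ t0, z0 j (Sum.inl t0) ⟨(q : ℕ), hq⟩ • mFam j t0 := by
        refine Finset.sum_congr rfl (fun t0 _ => ?_)
        simp only [hzdef, hmFamdef, mElem, Sum.elim_inl]
        rw [dif_pos hq]
      have e2 : ∑ i : Fin NG,
          z j (Sum.inr i) q • mElem R NL NG rr a
            (fun w' : Σ k', Fin (nW k') => u0 w'.1 w'.2) mm g j (Sum.inr i)
          = ∑ i : Fin (G0 j), z0 j (Sum.inr i) ⟨(q : ℕ), hq⟩ • g0 j i := by
        have e2a : ∀ i : Fin NG,
            z j (Sum.inr i) q • mElem R NL NG rr a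
              (fun w' : Σ k', Fin (nW k') => u0 w'.1 w'.2) mm g j (Sum.inr i)
            = (fun x : ℕ => if hi : x < G0 j
                then z0 j (Sum.inr ⟨x, hi⟩) ⟨(q : ℕ), hq⟩ • g0 j ⟨x, hi⟩ else 0) (i : ℕ) := by
          intro i
          simp only [hzdef, hgdef, mElem, Sum.elim_inr]
          rw [dif_pos hq]
          by_cases hi : (i : ℕ) < G0 j
          · simp only [Sum.elim_inr, dif_pos hi]
          · simp only [Sum.elim_inr, dif_neg hi, zero_smul]
        rw [Finset.sum_congr rfl (fun i _ => e2a i),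
          sum_pad (hG0 j) (fun x : ℕ => if hi : x < G0 j
            then z0 j (Sum.inr ⟨x, hi⟩) ⟨(q : ℕ), hq⟩ • g0 j ⟨x, hi⟩ else 0)
          (fun x hx => dif_neg (not_lt.mpr hx))]
        refine Finset.sum_congr rfl (fun i _ => ?_)
        rw [dif_pos i.2]
      rw [e1, e2]
      exact hz
    · refine Finset.sum_eq_zero (fun t _ => ?_)
      simp only [hzdef]
      rw [dif_neg hq, zero_smul]
  have htheta : ∀ j t, nElem R S NL NG (fun j' p => σ.A p.1 j') (fun j' w' => σ.B w'.1 j') rr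
      b (fun w' => v0 w'.1 w'.2) bb j t = ∑ q : Fin NQ, z j t q • d j q := by
    intro j t
    cases t with
    | inl t0 =>
      have eR : ∑ q : Fin NQ, z j (Sum.inl t0) q • d j q
          = ∑ q : Fin (Q0 j), z0 j (Sum.inl t0) q • d0 j q := by
        have eRa : ∀ q : Fin NQ, z j (Sum.inl t0) q • d j q
            = (fun x : ℕ => if hx : x < Q0 j
                then z0 j (Sum.inl t0) ⟨x, hx⟩ • d0 j ⟨x, hx⟩ else 0) (q : ℕ) := by
          intro q
          simp only [hzdef, hddef]
          by_cases hx : (q : ℕ) < Q0 j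
          · rw [dif_pos hx, dif_pos hx, dif_pos hx]
            rfl
          · rw [dif_neg hx, dif_neg hx, dif_neg hx, zero_smul]
        rw [Finset.sum_congr rfl (fun q _ => eRa q),
          sum_pad (hQ0 j) (fun x : ℕ => if hx : x < Q0 j
            then z0 j (Sum.inl t0) ⟨x, hx⟩ • d0 j ⟨x, hx⟩ else 0)
          (fun x hx => dif_neg (not_lt.mpr hx))]
        refine Finset.sum_congr rfl (fun q _ => ?_)
        rw [dif_pos q.2]
      rw [eR, ← hz2 j (Sum.inl t0)]
      simp only [hnFamdef, nElem, Sum.elim_inl]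
    | inr i =>
      by_cases hi : (i : ℕ) < G0 j
      · have hz := hz2 j (Sum.inr ⟨(i : ℕ), hi⟩)
        have eR : ∑ q : Fin NQ, z j (Sum.inr i) q • d j q
            = ∑ q : Fin (Q0 j), z0 j (Sum.inr ⟨(i : ℕ), hi⟩) q • d0 j q := by
          have eRa : ∀ q : Fin NQ, z j (Sum.inr i) q • d j q
              = (fun x : ℕ => if hx : x < Q0 j
                  then z0 j (Sum.inr ⟨(i : ℕ), hi⟩) ⟨x, hx⟩ • d0 j ⟨x, hx⟩ else 0) (q : ℕ) := by
            intro q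
            simp only [hzdef, hddef]
            by_cases hx : (q : ℕ) < Q0 j
            · rw [dif_pos hx, dif_pos hx, dif_pos hx]
              simp [hi]
            · rw [dif_neg hx, dif_neg hx, dif_neg hx, zero_smul]
          rw [Finset.sum_congr rfl (fun q _ => eRa q),
            sum_pad (hQ0 j) (fun x : ℕ => if hx : x < Q0 j
              then z0 j (Sum.inr ⟨(i : ℕ), hi⟩) ⟨x, hx⟩ • d0 j ⟨x, hx⟩ else 0)
            (fun x hx => dif_neg (not_lt.mpr hx))]
          refine Finset.sum_congr rfl (fun q _ => ?_)
          rw [dif_pos q.2]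
        rw [eR, ← hz]
        simp only [hnFamdef, nElem, Sum.elim_inr]
      · have eR : ∑ q : Fin NQ, z j (Sum.inr i) q • d j q = 0 := by
          refine Finset.sum_eq_zero (fun q _ => ?_)
          simp only [hzdef]
          by_cases hx : (q : ℕ) < Q0 j
          · rw [dif_pos hx]
            simp [hi]
          · rw [dif_neg hx, zero_smul]
        rw [eR]
        simp only [nElem, Sum.elim_inr]
  refine ⟨phiData R NL NQ NG rr z,
    thetaData R S NL NQ NG (fun j' p => σ.A p.1 j') (fun j' w' => σ.B w'.1 j') rr z,
    phi_sol_intro R NL NQ NG rr z a (fun w' => u0 w'.1 w'.2) mm g hphi,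
    theta_sol_intro R S NL NQ NG _ _ rr z b (fun w' => v0 w'.1 w'.2) bb d htheta, ?_⟩
  intro M' _ _ B' _ _ _ _ a' b' ha' hb'
  obtain ⟨u', mm', g', hphi'⟩ := phi_sol_elim R NL NQ NG rr z a' ha'
  obtain ⟨v', bb', d', htheta'⟩ := theta_sol_elim R S NL NQ NG _ _ rr z b' hb'
  refine ⟨fun k' => ∑ j' : Fin (nW k'), rtmul R M' B' (u' ⟨k', j'⟩) (v' ⟨k', j'⟩), fun j => ?_⟩
  exact (sigma_lhs R S σ M' B' nW a' b' u' v' j).trans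
    (recon R S NL NQ NG _ _ rr z a' u' mm' g' b' v' bb' d' hphi' htheta' j)

end Key2


end Colon

end MTM
namespace MTM

/-- If `M` is finitely generic in the definable subcategory `D` of
`Mod-R` and `B` is finitely generic in the definable subcategory `𝓑` of `R-Mod-S`,
then `⟨M ⊗_R B⟩ = D ⊗ 𝓑`. -/
theorem statement15 (R S : Type u) [Ring R] [Ring S]
    (D : Set (ModuleCat.{u} Rᵐᵒᵖ)) (hD : IsDefinable R D)
    (𝓑 : Set (Bimod R S)) (h𝓑 : IsDefinableBi R S 𝓑)
    (M : Type u) [AddCommGroup M] [Module Rᵐᵒᵖ M] (hM : FinGeneric R D M)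
    (B : Type u) [AddCommGroup B] [Module R B] [Module Sᵐᵒᵖ B] [SMulCommClass R Sᵐᵒᵖ B]
    (hB : FinGenericBi R S 𝓑 B) :
    gen S {ModuleCat.of Sᵐᵒᵖ (RTensor R M B)} = tensorProd R S D 𝓑 := by
  apply Set.Subset.antisymm
  · -- `⟨M ⊗ B⟩ ⊆ D ⊗ 𝓑` : the singleton is contained in the generating set
    intro x hx D' hD'
    refine hx D' ⟨hD'.1, ?_⟩
    rw [Set.singleton_subset_iff]
    exact hD'.2 ⟨ModuleCat.of Rᵐᵒᵖ M, hM.1, Bimod.of R S B, hB.1, rfl⟩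
  · -- `D ⊗ 𝓑 ⊆ ⟨M ⊗ B⟩`
    intro x hx C hC
    obtain ⟨⟨Φ, rfl⟩, hTC⟩ := hC
    refine hx (definedBy S Φ) ⟨⟨Φ, rfl⟩, ?_⟩
    rintro N ⟨Mc, hMc, Bm, hBm, rfl⟩
    intro p hp
    have hpT : p.num.sol (RTensor R M B) = p.den.sol (RTensor R M B) :=
      hTC rfl p hp
    show p.num.sol (RTensor R (↑Mc) (↑Bm)) = p.den.sol (RTensor R (↑Mc) (↑Bm))
    apply Set.Subset.antisymm
    · intro x' hx'
      obtain ⟨ν, aa, bbb, rfl⟩ := exists_ptensor R (↑Mc) (↑Bm) x'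
      obtain ⟨φ, θ, hφ, hθ, huniv⟩ := key2 R S p.num (↑Mc) (↑Bm) aa bbb hx'
      obtain ⟨astar, hagen⟩ := hM.2 (PIdx ν) inferInstance φ
      obtain ⟨bstar, hbgen⟩ := hB.2 (PIdx ν) inferInstance θ
      have hastar : astar ∈ φ.sol M := (hagen φ).mpr (fun _ _ => subset_rfl)
      have hbstar : bstar ∈ θ.sol B := (hbgen θ).mpr (fun _ _ => subset_rfl)
      have h1 : ptensor R M B astar bstar ∈ p.num.sol (RTensor R M B) :=
        huniv M B astar bstar hastar hbstar
      rw [hpT] at h1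
      obtain ⟨φ₂, θ₂, hφ₂, hθ₂, huniv₂⟩ := key2 R S p.den M B astar bstar h1
      have hle : LeOn R D φ φ₂ := (hagen φ₂).mp hφ₂
      have hble : BiLeOn R S 𝓑 θ θ₂ := (hbgen θ₂).mp hθ₂
      have ha2 : aa ∈ φ₂.sol (↑Mc) := hle Mc hMc hφ
      have hb2 : bbb ∈ θ₂.sol (↑Bm) := hble Bm hBm hθ
      exact huniv₂ (↑Mc) (↑Bm) aa bbb ha2 hb2
    · exact p.le _


end MTM
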